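/- arXiv:0707.3729 — 7 statements merged into one kernel-verified Lean document; each statement's English description precedes it below -/
import Mathlib

section
/- Let (f_ρ)_{ρ>0} be a family of measurable functions on (0,∞) such that for some constants 0 < p < γ < q and c > 0: (i) for every a > 0, sup_{v>a} v^{−p} F̄_ρ(1) |f_ρ(v)| → 0 as ρ → 0⁺, and (ii) F̄_ρ(1)|f_ρ(v)| ≤ c v^q for all ρ > 0 and v > 0. Then lim_{ρ→0⁺} ∫_{(0,∞)} f_ρ(v) dF_ρ(v) = 0. -/
/-!
Iterating the doubling ratio `F̄(2v) / F̄(v) → 2^(-γ)` gives Potter bounds: for `s < γ < S` there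
is `V` with `F̄(t v) ≤ 2^s t^(-s) F̄(v)` and `F̄(v) ≤ 2^S t^S F̄(t v)` for `v ≥ V`, `t ≥ 1`. These
bounds are scale invariant, so `F̄_ρ` satisfies them above `ρ V`. Split `(0, ∞)` at `ρ V` and `a`.
On `(0, ρ V]`, (ii) and the lower bound `F̄_ρ(1) ≳ (ρ V)^S` give `O((ρ V)^(q - S))`. On `(ρ V, a]`
and `(a, ∞)`, summing (ii), resp. (i), over dyadic shells gives geometric series, bounded by
`a^(q - S)` and `ε a^(p - S)` once divided by `F̄_ρ(1)`. Choose `a`, then `ε`, then `ρ`.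
-/

open MeasureTheory Filter Topology Set
open scoped ENNReal

def PotterUpper (h : ℝ → ℝ) (A s V : ℝ) : Prop :=
  ∀ v ≥ V, ∀ t ≥ (1 : ℝ), h (t * v) ≤ A * t ^ (-s) * h v

def PotterLower (h : ℝ → ℝ) (A s V : ℝ) : Prop :=
  ∀ v ≥ V, ∀ t ≥ (1 : ℝ), h v ≤ A * t ^ s * h (t * v)

theorem PotterUpper.mono {h : ℝ → ℝ} {A s V V' : ℝ} (hpot : PotterUpper h A s V) (hV : V ≤ V') :
    PotterUpper h A s V' :=
  fun v hv => hpot v (hV.trans hv)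

theorem PotterUpper.comp_div {h : ℝ → ℝ} {A s V ρ : ℝ} (hpot : PotterUpper h A s V) (hρ : 0 < ρ) :
    PotterUpper (fun v => h (v / ρ)) A s (ρ * V) := by
  intro v hv t ht
  simpa only [mul_div_assoc] using hpot (v / ρ) ((le_div_iff₀' hρ).2 hv) t ht

theorem PotterLower.comp_div {h : ℝ → ℝ} {A s V ρ : ℝ} (hpot : PotterLower h A s V) (hρ : 0 < ρ) :
    PotterLower (fun v => h (v / ρ)) A s (ρ * V) := by
  intro v hv t ht
  simpa only [mul_div_assoc] using hpot (v / ρ) ((le_div_iff₀' hρ).2 hv) t ht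

theorem forall_ge_one_of_dyadic {R : ℝ → ℝ → Prop} {V : ℝ} (hV : 0 ≤ V)
    (hbase : ∀ v ≥ V, ∀ t ∈ Icc (1 : ℝ) 2, R v t)
    (hstep : ∀ v ≥ V, ∀ t ≥ (1 : ℝ), R (2 * v) t → R v (2 * t)) :
    ∀ v ≥ V, ∀ t ≥ (1 : ℝ), R v t := by
  have key : ∀ n : ℕ, ∀ v ≥ V, ∀ t ∈ Icc (1 : ℝ) (2 ^ (n + 1)), R v t := by
    intro n
    induction n with
    | zero => simpa using hbase
    | succ n ih =>
      intro v hv t ⟨ht1, ht2⟩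
      rcases le_or_gt t 2 with ht | ht
      · exact hbase v hv t ⟨ht1, ht⟩
      · have h2v : 2 * v ≥ V := by linarith [hV.trans hv]
        have := hstep v hv (t / 2) (by linarith)
          (ih (2 * v) h2v (t / 2) ⟨by linarith, by rw [pow_succ] at ht2; linarith⟩)
        rwa [mul_div_cancel₀ t two_ne_zero] at this
  intro v hv t ht
  obtain ⟨n, hn⟩ := pow_unbounded_of_one_lt t one_lt_two
  exact key n v hv t ⟨ht, hn.le.trans (pow_le_pow_right₀ one_le_two n.le_succ)⟩

theorem potterUpper_of_doubling {h : ℝ → ℝ} {s V : ℝ} (hh : Antitone h) (h0 : 0 ≤ h)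
    (hs : 0 ≤ s) (hV : 0 ≤ V) (hdouble : ∀ v ≥ V, h (2 * v) ≤ 2 ^ (-s) * h v) :
    PotterUpper h (2 ^ s) s V := by
  refine forall_ge_one_of_dyadic hV (fun v hv t ⟨ht1, ht2⟩ => ?_) (fun v hv t ht ih => ?_)
  · have hv0 : 0 ≤ v := hV.trans hv
    have hA : 1 ≤ (2 : ℝ) ^ s * t ^ (-s) := by
      rw [Real.rpow_neg (by linarith), ← div_eq_mul_inv, one_le_div (by positivity)]
      exact Real.rpow_le_rpow (by linarith) ht2 hs
    calc h (t * v) ≤ h v := hh (le_mul_of_one_le_left hv0 ht1)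
      _ ≤ 2 ^ s * t ^ (-s) * h v := le_mul_of_one_le_left (h0 v) hA
  · calc h (2 * t * v) = h (t * (2 * v)) := by ring_nf
      _ ≤ 2 ^ s * t ^ (-s) * h (2 * v) := ih
      _ ≤ 2 ^ s * t ^ (-s) * (2 ^ (-s) * h v) := by gcongr; exact hdouble v hv
      _ = 2 ^ s * (2 * t) ^ (-s) * h v := by
        rw [Real.mul_rpow zero_le_two (by linarith)]; ring

theorem potterLower_of_doubling {h : ℝ → ℝ} {s V : ℝ} (hh : Antitone h) (h0 : 0 ≤ h)
    (hs : 0 ≤ s) (hV : 0 ≤ V) (hdouble : ∀ v ≥ V, 2 ^ (-s) * h v ≤ h (2 * v)) :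
    PotterLower h (2 ^ s) s V := by
  have hdouble' : ∀ v ≥ V, h v ≤ 2 ^ s * h (2 * v) := fun v hv => by
    have := mul_le_mul_of_nonneg_left (hdouble v hv) (by positivity : (0 : ℝ) ≤ 2 ^ s)
    rwa [← mul_assoc, ← Real.rpow_add two_pos, add_neg_cancel, Real.rpow_zero, one_mul] at this
  refine forall_ge_one_of_dyadic hV (fun v hv t ⟨ht1, ht2⟩ => ?_) (fun v hv t ht ih => ?_)
  · have hv0 : 0 ≤ v := hV.trans hv
    calc h v ≤ 2 ^ s * h (2 * v) := hdouble' v hv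
      _ ≤ 2 ^ s * h (t * v) := by gcongr; exact hh (by nlinarith)
      _ ≤ 2 ^ s * t ^ s * h (t * v) := by
        rw [mul_assoc]; gcongr
        exact le_mul_of_one_le_left (h0 _) (Real.one_le_rpow ht1 hs)
  · calc h v ≤ 2 ^ s * h (2 * v) := hdouble' v hv
      _ ≤ 2 ^ s * (2 ^ s * t ^ s * h (t * (2 * v))) := by gcongr
      _ = 2 ^ s * (2 * t) ^ s * h (2 * t * v) := by
        rw [Real.mul_rpow zero_le_two (by linarith)]; ring_nf

theorem exists_potter_of_tendsto {h : ℝ → ℝ} {γ s S : ℝ} (hh : Antitone h) (hpos : ∀ v, 0 < h v)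
    (hreg : Tendsto (fun v => h (2 * v) / h v) atTop (𝓝 (2 ^ (-γ))))
    (hs : 0 ≤ s) (hsγ : s < γ) (hγS : γ < S) :
    ∃ V > 0, PotterUpper h (2 ^ s) s V ∧ PotterLower h (2 ^ S) S V := by
  have hlt : (2 : ℝ) ^ (-S) < 2 ^ (-γ) ∧ (2 : ℝ) ^ (-γ) < 2 ^ (-s) :=
    ⟨Real.rpow_lt_rpow_of_exponent_lt one_lt_two (by linarith),
      Real.rpow_lt_rpow_of_exponent_lt one_lt_two (by linarith)⟩
  obtain ⟨V₀, hV₀⟩ := eventually_atTop.1 (hreg.eventually (Ioo_mem_nhds hlt.1 hlt.2))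
  have hratio : ∀ v ≥ max V₀ 1, 2 ^ (-S) * h v < h (2 * v) ∧ h (2 * v) < 2 ^ (-s) * h v :=
    fun v hv => by
      have := hV₀ v (le_trans (le_max_left _ _) hv)
      rwa [lt_div_iff₀ (hpos v), div_lt_iff₀ (hpos v)] at this
  have h0 : 0 ≤ h := fun v => (hpos v).le
  refine ⟨max V₀ 1, by positivity, ?_, ?_⟩
  · exact potterUpper_of_doubling hh h0 hs (by positivity) fun v hv => (hratio v hv).2.le
  · exact potterLower_of_doubling hh h0 (by linarith) (by positivity) fun v hv => (hratio v hv).1.le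

theorem setLIntegral_le_of_geometric_cover {α : Type*} [MeasurableSpace α] {μ : Measure α}
    {s : Set α} {S : ℕ → Set α} {g : α → ℝ≥0∞} {C r : ℝ} (hC : 0 ≤ C) (hr0 : 0 ≤ r) (hr1 : r < 1)
    (hcov : s ⊆ ⋃ j, S j) (hblock : ∀ j, ∫⁻ x in S j, g x ∂μ ≤ ENNReal.ofReal (C * r ^ j)) :
    ∫⁻ x in s, g x ∂μ ≤ ENNReal.ofReal (C / (1 - r)) := by
  have hsum : ∑' j : ℕ, ENNReal.ofReal (C * r ^ j) = ENNReal.ofReal (C / (1 - r)) := by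
    rw [← ENNReal.ofReal_tsum_of_nonneg (fun j => by positivity)
      ((summable_geometric_of_lt_one hr0 hr1).mul_left C), tsum_mul_left,
      tsum_geometric_of_lt_one hr0 hr1, div_eq_mul_inv]
  calc ∫⁻ x in s, g x ∂μ ≤ ∫⁻ x in ⋃ j, S j, g x ∂μ := lintegral_mono_set hcov
    _ ≤ ∑' j, ∫⁻ x in S j, g x ∂μ := lintegral_iUnion_le _ _
    _ ≤ ∑' j : ℕ, ENNReal.ofReal (C * r ^ j) := ENNReal.tsum_le_tsum hblock
    _ = ENNReal.ofReal (C / (1 - r)) := hsum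

theorem setLIntegral_Ioc_rpow_le {ν : Measure ℝ} [IsFiniteMeasure ν] {a b p N : ℝ} (ha : 0 ≤ a)
    (hp : 0 ≤ p) (hN : ν.real (Ioi a) ≤ N) :
    ∫⁻ x in Ioc a b, ENNReal.ofReal (x ^ p) ∂ν ≤ ENNReal.ofReal (b ^ p * N) := by
  calc ∫⁻ x in Ioc a b, ENNReal.ofReal (x ^ p) ∂ν
      ≤ ∫⁻ _ in Ioc a b, ENNReal.ofReal (b ^ p) ∂ν :=
        setLIntegral_mono measurable_const fun x hx =>
          ENNReal.ofReal_le_ofReal (Real.rpow_le_rpow (ha.trans hx.1.le) hx.2 hp)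
    _ = ENNReal.ofReal (b ^ p) * ν (Ioc a b) := setLIntegral_const _ _
    _ ≤ ENNReal.ofReal (b ^ p) * ENNReal.ofReal N := by
        gcongr
        rw [← ofReal_measureReal]
        exact ENNReal.ofReal_le_ofReal ((measureReal_mono Ioc_subset_Ioi_self).trans hN)
    _ = ENNReal.ofReal (b ^ p * N) := (ENNReal.ofReal_mul' (measureReal_nonneg.trans hN)).symm

theorem exists_mem_Ioc_two_pow_mul {b x : ℝ} (hb : 0 < b) (hx : b < x) :
    ∃ j : ℕ, x ∈ Ioc (2 ^ j * b) (2 ^ (j + 1) * b) := by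
  obtain ⟨n, hn⟩ := exists_mem_Ioc_zpow (div_pos (hb.trans hx) hb) one_lt_two
  have hn0 : 0 ≤ n := by
    have : (1 : ℝ) < 2 ^ (n + 1) := ((one_lt_div hb).2 hx).trans_le hn.2
    have := (one_lt_zpow_iff_right₀ one_lt_two).1 this
    omega
  lift n to ℕ using hn0
  refine ⟨n, ?_, ?_⟩
  · simpa [← lt_div_iff₀ hb] using hn.1
  · have h2 := hn.2
    norm_cast at h2
    rw [div_le_iff₀ hb] at h2
    exact_mod_cast h2

theorem lintegral_Ioi_rpow_le {ν : Measure ℝ} [IsFiniteMeasure ν] {A p s b : ℝ} (hA : 0 ≤ A)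
    (hp : 0 ≤ p) (hps : p < s) (hb : 0 < b) (hpot : PotterUpper (fun v => ν.real (Ioi v)) A s b) :
    ∫⁻ x in Ioi b, ENNReal.ofReal (x ^ p) ∂ν
      ≤ ENNReal.ofReal (A * 2 ^ p / (1 - 2 ^ (p - s)) * (b ^ p * ν.real (Ioi b))) := by
  have hblock : ∀ j : ℕ, ∫⁻ x in Ioc (2 ^ j * b) (2 ^ (j + 1) * b), ENNReal.ofReal (x ^ p) ∂ν
      ≤ ENNReal.ofReal (A * 2 ^ p * (b ^ p * ν.real (Ioi b)) * (2 ^ (p - s)) ^ j) := fun j => by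
    convert setLIntegral_Ioc_rpow_le (by positivity) hp
      (hpot b le_rfl (2 ^ j) (one_le_pow₀ one_le_two)) using 2
    rw [Real.mul_rpow (by positivity) hb.le, ← Real.rpow_pow_comm zero_le_two,
      ← Real.rpow_pow_comm zero_le_two, Real.rpow_sub two_pos, div_eq_mul_inv,
      ← Real.rpow_neg zero_le_two]
    ring
  have hnonneg := measureReal_nonneg (μ := ν) (s := Ioi b)
  rw [← mul_div_right_comm]
  exact setLIntegral_le_of_geometric_cover (by positivity) (by positivity)
    (Real.rpow_lt_one_of_one_lt_of_neg one_lt_two (by linarith))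
    (fun x hx => mem_iUnion.2 (exists_mem_Ioc_two_pow_mul hb hx)) hblock

theorem lintegral_Ioc_rpow_le {ν : Measure ℝ} [IsFiniteMeasure ν] {A s q u b : ℝ} (hA : 0 ≤ A)
    (hs : 0 ≤ s) (hsq : s < q) (hu : 0 < u) (hpot : PotterLower (fun v => ν.real (Ioi v)) A s u) :
    ∫⁻ x in Ioc u b, ENNReal.ofReal (x ^ q) ∂ν
      ≤ ENNReal.ofReal (A * 2 ^ s / (1 - 2 ^ (s - q)) * (b ^ q * ν.real (Ioi b))) := by
  rcases le_or_gt b u with hbu | hub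
  · simp [Ioc_eq_empty_of_le hbu]
  have hb : 0 < b := hu.trans hub
  have hcover : Ioc u b ⊆ ⋃ j : ℕ, Ioc (max (b / 2 ^ (j + 1)) u) (b / 2 ^ j) := fun x hx => by
    have hx0 : 0 < x := hu.trans hx.1
    obtain ⟨j, hj1, hj2⟩ := exists_nat_pow_near ((one_le_div hx0).2 hx.2) one_lt_two
    refine mem_iUnion.2 ⟨j, max_lt ?_ hx.1, ?_⟩
    · rwa [div_lt_iff₀ (by positivity), ← div_lt_iff₀' hx0]
    · rwa [le_div_iff₀ (by positivity), ← le_div_iff₀' hx0]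
  have hblock : ∀ j : ℕ,
      ∫⁻ x in Ioc (max (b / 2 ^ (j + 1)) u) (b / 2 ^ j), ENNReal.ofReal (x ^ q) ∂ν
        ≤ ENNReal.ofReal (A * 2 ^ s * (b ^ q * ν.real (Ioi b)) * (2 ^ (s - q)) ^ j) := fun j => by
    set w := max (b / 2 ^ (j + 1)) u
    rcases le_or_gt (b / 2 ^ j) w with hempty | hw
    · simp [Ioc_eq_empty_of_le hempty]
    have hw0 : 0 < w := hu.trans_le (le_max_right _ _)
    have hwb : w ≤ b := hw.le.trans (div_le_self hb.le (one_le_pow₀ one_le_two))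
    have hbw : b / w ≤ 2 ^ (j + 1) := by
      rw [div_le_iff₀ hw0, ← div_le_iff₀' (by positivity)]; exact le_max_left _ _
    have htail : ν.real (Ioi w) ≤ A * (2 ^ (j + 1)) ^ s * ν.real (Ioi b) := by
      have := hpot w (le_max_right _ _) (b / w) ((one_le_div hw0).2 hwb)
      rw [div_mul_cancel₀ b hw0.ne'] at this
      exact this.trans (by gcongr)
    convert setLIntegral_Ioc_rpow_le hw0.le (hs.trans hsq.le) htail using 2
    rw [Real.div_rpow hb.le (by positivity), ← Real.rpow_pow_comm zero_le_two,
      ← Real.rpow_pow_comm zero_le_two, Real.rpow_sub two_pos, div_pow, pow_succ]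
    field_simp
  have hnonneg := measureReal_nonneg (μ := ν) (s := Ioi b)
  rw [← mul_div_right_comm]
  exact setLIntegral_le_of_geometric_cover (by positivity) (by positivity)
    (Real.rpow_lt_one_of_one_lt_of_neg one_lt_two (by linarith)) hcover hblock

theorem setLIntegral_ofReal_abs_le {ν : Measure ℝ} {s : Set ℝ} {φ g : ℝ → ℝ} {C M : ℝ}
    (hC : 0 ≤ C) (hg : Measurable g) (hφ : ∀ x ∈ s, |φ x| ≤ C * g x)
    (hM : ∫⁻ x in s, ENNReal.ofReal (g x) ∂ν ≤ ENNReal.ofReal M) :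
    ∫⁻ x in s, ENNReal.ofReal |φ x| ∂ν ≤ ENNReal.ofReal (C * M) :=
  calc ∫⁻ x in s, ENNReal.ofReal |φ x| ∂ν
      ≤ ∫⁻ x in s, ENNReal.ofReal C * ENNReal.ofReal (g x) ∂ν :=
        setLIntegral_mono (by fun_prop) fun x hx => by
          rw [← ENNReal.ofReal_mul hC]; exact ENNReal.ofReal_le_ofReal (hφ x hx)
    _ = ENNReal.ofReal C * ∫⁻ x in s, ENNReal.ofReal (g x) ∂ν :=
        lintegral_const_mul' _ _ ENNReal.ofReal_ne_top
    _ ≤ ENNReal.ofReal C * ENNReal.ofReal M := by gcongr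
    _ = ENNReal.ofReal (C * M) := (ENNReal.ofReal_mul hC).symm

theorem geometric_const_nonneg {c r : ℝ} (hc : 0 ≤ c) (hr : r < 0) : 0 ≤ c / (1 - 2 ^ r) :=
  div_nonneg hc (sub_nonneg.2 (Real.rpow_le_one_of_one_le_of_nonpos one_le_two hr.le))

theorem lintegral_abs_le_of_potter {ν : Measure ℝ} [IsProbabilityMeasure ν] {φ : ℝ → ℝ}
    {A B p q s S u a C E : ℝ} (hA : 0 ≤ A) (hB : 0 ≤ B) (hp : 0 ≤ p) (hps : p < s) (hS : 0 ≤ S)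
    (hSq : S < q) (hu : 0 < u) (hua : u ≤ a) (hC : 0 ≤ C) (hE : 0 ≤ E)
    (hup : PotterUpper (fun v => ν.real (Ioi v)) A s u)
    (hlo : PotterLower (fun v => ν.real (Ioi v)) B S u)
    (hsmall : ∀ v ∈ Ioc 0 a, |φ v| ≤ C * v ^ q) (hlarge : ∀ v > a, |φ v| ≤ E * v ^ p) :
    ∫⁻ v in Ioi 0, ENNReal.ofReal |φ v| ∂ν
      ≤ ENNReal.ofReal (C * u ^ q + C * (B * 2 ^ S / (1 - 2 ^ (S - q)) * (a ^ q * ν.real (Ioi a)))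
          + E * (A * 2 ^ p / (1 - 2 ^ (p - s)) * (a ^ p * ν.real (Ioi a)))) := by
  have ha : 0 < a := hu.trans_le hua
  have hq : 0 ≤ q := hS.trans hSq.le
  have hnear : ∫⁻ v in Ioc 0 u, ENNReal.ofReal |φ v| ∂ν ≤ ENNReal.ofReal (C * u ^ q) := by
    refine setLIntegral_ofReal_abs_le (g := fun _ => u ^ q) hC measurable_const
      (fun v hv => (hsmall v ⟨hv.1, hv.2.trans hua⟩).trans ?_) ?_
    · gcongr; exacts [hv.1.le, hv.2]
    · rw [setLIntegral_const]
      exact mul_le_of_le_one_right' prob_le_one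
  have hmiddle := setLIntegral_ofReal_abs_le hC (by fun_prop)
    (fun v hv => hsmall v ⟨hu.trans hv.1, hv.2⟩) (lintegral_Ioc_rpow_le (b := a) hB hS hSq hu hlo)
  have hfar := setLIntegral_ofReal_abs_le hE (by fun_prop) hlarge
    (lintegral_Ioi_rpow_le hA hp hps ha (hup.mono hua))
  have hsplit : Ioi (0 : ℝ) = Ioc 0 u ∪ (Ioc u a ∪ Ioi a) := by
    rw [Ioc_union_Ioi_eq_Ioi hua, Ioc_union_Ioi_eq_Ioi hu.le]
  have hK₁ := geometric_const_nonneg (c := B * 2 ^ S) (by positivity) (by linarith : S - q < 0)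
  have hK₂ := geometric_const_nonneg (c := A * 2 ^ p) (by positivity) (by linarith : p - s < 0)
  have hnonneg := measureReal_nonneg (μ := ν) (s := Ioi a)
  rw [hsplit, ENNReal.ofReal_add (by positivity) (by positivity),
    ENNReal.ofReal_add (by positivity) (by positivity), add_assoc]
  calc ∫⁻ v in Ioc 0 u ∪ (Ioc u a ∪ Ioi a), ENNReal.ofReal |φ v| ∂ν
      ≤ ∫⁻ v in Ioc 0 u, ENNReal.ofReal |φ v| ∂ν
        + (∫⁻ v in Ioc u a, ENNReal.ofReal |φ v| ∂ν + ∫⁻ v in Ioi a, ENNReal.ofReal |φ v| ∂ν) :=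
      (lintegral_union_le _ _ _).trans (add_le_add le_rfl (lintegral_union_le _ _ _))
    _ ≤ _ := add_le_add hnear (add_le_add hmiddle hfar)

theorem PotterLower.rpow_mul_le {h : ℝ → ℝ} {B S V x : ℝ} (hpot : PotterLower h B S V)
    (hx : 0 < x) (hVx : V ≤ x) (hx1 : x ≤ 1) (r : ℝ) :
    x ^ r * h x ≤ B * x ^ (r - S) * h 1 := by
  have := hpot x hVx x⁻¹ (one_le_inv₀ hx |>.2 hx1)
  rw [inv_mul_cancel₀ hx.ne', Real.inv_rpow hx.le, ← Real.rpow_neg hx.le] at this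
  calc x ^ r * h x ≤ x ^ r * (B * x ^ (-S) * h 1) := by gcongr
    _ = B * x ^ (r - S) * h 1 := by rw [Real.rpow_sub hx, Real.rpow_neg hx.le]; ring

theorem abs_setIntegral_Ioi_le_of_potter {ν : Measure ℝ} [IsProbabilityMeasure ν] {φ : ℝ → ℝ}
    {A B p q s S u a c ε : ℝ} (hA : 0 ≤ A) (hB : 0 ≤ B) (hp : 0 ≤ p) (hps : p < s) (hS : 0 ≤ S)
    (hSq : S < q) (hu : 0 < u) (hua : u ≤ a) (ha1 : a ≤ 1) (hc : 0 ≤ c) (hε : 0 ≤ ε)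
    (hup : PotterUpper (fun v => ν.real (Ioi v)) A s u)
    (hlo : PotterLower (fun v => ν.real (Ioi v)) B S u) (hT : 0 < ν.real (Ioi 1))
    (hsmall : ∀ v > 0, ν.real (Ioi 1) * |φ v| ≤ c * v ^ q)
    (hlarge : ∀ v > a, v ^ (-p) * ν.real (Ioi 1) * |φ v| ≤ ε) :
    |∫ v in Ioi 0, φ v ∂ν|
      ≤ c * B / ν.real (Ioi u) * u ^ (q - S)
        + c * (B * 2 ^ S / (1 - 2 ^ (S - q))) * B * a ^ (q - S)
        + ε * (A * 2 ^ p / (1 - 2 ^ (p - s))) * B * a ^ (p - S) := by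
  set T := ν.real (Ioi 1)
  have ha : 0 < a := hu.trans_le hua
  have hTu : T ≤ ν.real (Ioi u) := measureReal_mono (Ioi_subset_Ioi (hua.trans ha1))
  have hsmall' : ∀ v ∈ Ioc 0 a, |φ v| ≤ c / T * v ^ q := fun v hv => by
    rw [div_mul_eq_mul_div, le_div_iff₀ hT, mul_comm]; exact hsmall v hv.1
  have hlarge' : ∀ v > a, |φ v| ≤ ε / T * v ^ p := fun v hv => by
    have hv0 : 0 < v := ha.trans hv
    have := mul_le_mul_of_nonneg_left (hlarge v hv) (Real.rpow_nonneg hv0.le p)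
    rw [div_mul_eq_mul_div, le_div_iff₀ hT]
    calc |φ v| * T = v ^ p * (v ^ (-p) * T * |φ v|) := by
          rw [Real.rpow_neg hv0.le]; field_simp
      _ ≤ ε * v ^ p := by linarith
  have hbound := lintegral_abs_le_of_potter hA hB hp hps hS hSq hu hua (div_nonneg hc hT.le)
    (div_nonneg hε hT.le) hup hlo hsmall' hlarge'
  set K₁ := B * 2 ^ S / (1 - 2 ^ (S - q))
  set K₂ := A * 2 ^ p / (1 - 2 ^ (p - s))
  have hK₁ : 0 ≤ K₁ := geometric_const_nonneg (by positivity) (by linarith)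
  have hK₂ : 0 ≤ K₂ := geometric_const_nonneg (by positivity) (by linarith)
  have habs := norm_integral_le_lintegral_norm (μ := ν.restrict (Ioi 0)) φ
  simp only [Real.norm_eq_abs] at habs
  refine habs.trans
    (ENNReal.toReal_le_of_le_ofReal (by positivity) (hbound.trans (ENNReal.ofReal_le_ofReal ?_)))
  have h₀ := mul_le_mul_of_nonneg_left (hlo.rpow_mul_le hu le_rfl (hua.trans ha1) q) hc
  have h₁ := mul_le_mul_of_nonneg_left (hlo.rpow_mul_le ha hua ha1 q) (mul_nonneg hc hK₁)
  have h₂ := mul_le_mul_of_nonneg_left (hlo.rpow_mul_le ha hua ha1 p) (mul_nonneg hε hK₂)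
  gcongr ?_ + ?_ + ?_
  · rw [div_mul_eq_mul_div, div_mul_eq_mul_div, div_le_div_iff₀ hT (hT.trans_le hTu)]; linarith
  · rw [div_mul_eq_mul_div, div_le_iff₀ hT]; linarith
  · rw [div_mul_eq_mul_div, div_le_iff₀ hT]; linarith

theorem measureReal_map_mul_Ioi {μ : Measure ℝ} {ρ : ℝ} (hρ : 0 < ρ) (v : ℝ) :
    (μ.map (ρ * ·)).real (Ioi v) = μ.real (Ioi (v / ρ)) := by
  rw [measureReal_def, measureReal_def,
    Measure.map_apply (measurable_const_mul ρ) measurableSet_Ioi, preimage_const_mul_Ioi₀ v hρ]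

theorem tendsto_const_mul_rpow_nhds_zero {r : ℝ} (hr : 0 < r) (C : ℝ) :
    Tendsto (fun x : ℝ => C * x ^ r) (𝓝 0) (𝓝 0) := by
  simpa [Real.zero_rpow hr.ne'] using
    (Real.continuousAt_rpow_const 0 r (Or.inr hr.le)).tendsto.const_mul C

theorem abs_setIntegral_map_mul_le_of_potter {μ : Measure ℝ} [IsProbabilityMeasure μ]
    {φ : ℝ → ℝ} {A B p q s S V a c ε ρ : ℝ} (hρ : 0 < ρ) (hA : 0 ≤ A) (hB : 0 ≤ B) (hp : 0 ≤ p)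
    (hps : p < s) (hS : 0 ≤ S) (hSq : S < q) (hV : 0 < V) (hVa : ρ * V ≤ a) (ha1 : a ≤ 1)
    (hc : 0 ≤ c) (hε : 0 ≤ ε) (hup : PotterUpper (fun v => μ.real (Ioi v)) A s V)
    (hlo : PotterLower (fun v => μ.real (Ioi v)) B S V) (hT : 0 < μ.real (Ioi ρ⁻¹))
    (hsmall : ∀ v > 0, μ.real (Ioi ρ⁻¹) * |φ v| ≤ c * v ^ q)
    (hlarge : ∀ v > a, v ^ (-p) * μ.real (Ioi ρ⁻¹) * |φ v| ≤ ε) :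
    |∫ v in Ioi 0, φ v ∂(μ.map (ρ * ·))|
      ≤ c * B / μ.real (Ioi V) * (ρ * V) ^ (q - S)
        + c * (B * 2 ^ S / (1 - 2 ^ (S - q))) * B * a ^ (q - S)
        + ε * (A * 2 ^ p / (1 - 2 ^ (p - s))) * B * a ^ (p - S) := by
  have := Measure.isProbabilityMeasure_map (μ := μ) (measurable_const_mul ρ).aemeasurable
  have htail : (fun v => (μ.map (ρ * ·)).real (Ioi v)) = fun v => μ.real (Ioi (v / ρ)) :=
    funext (measureReal_map_mul_Ioi hρ)
  have hT' : (μ.map (ρ * ·)).real (Ioi 1) = μ.real (Ioi ρ⁻¹) := by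
    rw [measureReal_map_mul_Ioi hρ, one_div]
  have key := abs_setIntegral_Ioi_le_of_potter hA hB hp hps hS hSq (mul_pos hρ hV) hVa ha1 hc hε
    (htail ▸ hup.comp_div hρ) (htail ▸ hlo.comp_div hρ) (hT' ▸ hT) (hT' ▸ hsmall) (hT' ▸ hlarge)
  rwa [measureReal_map_mul_Ioi hρ, mul_div_cancel_left₀ _ hρ.ne'] at key

theorem regvar_family_limit_smallpow_general
    (γ : ℝ)
    (μ : Measure ℝ) [IsProbabilityMeasure μ]
    (hpos : ∀ v : ℝ, 0 < μ (Set.Ioi v))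
    (hreg : ∀ a > (0:ℝ), Tendsto
      (fun v : ℝ => (μ (Set.Ioi (a * v))).toReal / (μ (Set.Ioi v)).toReal)
      atTop (𝓝 (a ^ (-γ))))
    (f : ℝ → ℝ → ℝ)
    (p q c : ℝ) (hp : 0 < p) (hpγ : p < γ) (hγq : γ < q) (hc : 0 < c)
    (hsup : ∀ a > (0:ℝ), ∀ ε > (0:ℝ), ∀ᶠ ρ in 𝓝[>] (0:ℝ),
      ∀ v > a, v ^ (-p) * (μ (Set.Ioi ρ⁻¹)).toReal * |f ρ v| ≤ ε)
    (hbound : ∀ ρ > (0:ℝ), ∀ v > (0:ℝ),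
      (μ (Set.Ioi ρ⁻¹)).toReal * |f ρ v| ≤ c * v ^ q) :
    Tendsto
      (fun ρ : ℝ => ∫ v in Set.Ioi (0:ℝ), f ρ v ∂(Measure.map (fun x => ρ * x) μ))
      (𝓝[>] (0:ℝ)) (𝓝 0) := by
  obtain ⟨s, hps, hsγ⟩ := exists_between hpγ
  obtain ⟨S, hγS, hSq⟩ := exists_between hγq
  have htail_pos : ∀ v, 0 < μ.real (Ioi v) := fun v => ENNReal.toReal_pos (hpos v).ne' (by simp)
  have htail_anti : Antitone fun v => μ.real (Ioi v) := fun _ _ huv =>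
    measureReal_mono (Ioi_subset_Ioi huv)
  obtain ⟨V, hV, hup, hlo⟩ := exists_potter_of_tendsto (s := s) (S := S) htail_anti htail_pos
    (hreg 2 two_pos) (by linarith) hsγ hγS
  set K₁ := (2 : ℝ) ^ S * 2 ^ S / (1 - 2 ^ (S - q))
  set K₂ := (2 : ℝ) ^ s * 2 ^ p / (1 - 2 ^ (p - s))
  rw [Metric.tendsto_nhds]
  intro η hη
  obtain ⟨a, haη, ha0, ha1⟩ : ∃ a, c * K₁ * 2 ^ S * a ^ (q - S) < η / 3 ∧ a ∈ Ioc 0 1 :=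
    (((tendsto_const_mul_rpow_nhds_zero (sub_pos.2 hSq) _).mono_left nhdsWithin_le_nhds).eventually
      (gt_mem_nhds (by positivity))).and (Ioc_mem_nhdsGT one_pos) |>.exists
  obtain ⟨ε, hε, hεη⟩ := exists_pos_mul_lt (by positivity : 0 < η / 3) (K₂ * 2 ^ S * a ^ (p - S))
  have hscale : Tendsto (fun ρ : ℝ => ρ * V) (𝓝[>] 0) (𝓝 0) := by
    simpa using (tendsto_id.mul_const V).mono_left (nhdsWithin_le_nhds (a := (0 : ℝ)))
  have hnear := (tendsto_const_mul_rpow_nhds_zero (sub_pos.2 hSq) (c * 2 ^ S / μ.real (Ioi V))).comp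
    hscale |>.eventually (gt_mem_nhds (by positivity : 0 < η / 3))
  have hρa := hscale.eventually (ge_mem_nhds ha0)
  filter_upwards [self_mem_nhdsWithin, hsup a ha0 ε hε, hnear, hρa] with ρ hρ hfar hnear hρa
  have key := abs_setIntegral_map_mul_le_of_potter (φ := f ρ) hρ (by positivity) (by positivity)
    hp.le hps (by linarith) hSq hV hρa ha1 hc.le hε.le hup hlo (htail_pos _) (hbound ρ hρ) hfar
  rw [Real.dist_eq, sub_zero]
  simp only [Function.comp_apply] at hnear
  linarith

theorem regvar_family_limit_smallpow
    (γ : ℝ) (hγ : 0 < γ)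
    (μ : Measure ℝ) [IsProbabilityMeasure μ]
    (hsupp : μ (Set.Iio 0) = 0)
    (hpos : ∀ v : ℝ, 0 < μ (Set.Ioi v))
    (hreg : ∀ a > (0:ℝ), Tendsto
      (fun v : ℝ => (μ (Set.Ioi (a * v))).toReal / (μ (Set.Ioi v)).toReal)
      atTop (𝓝 (a ^ (-γ))))
    (f : ℝ → ℝ → ℝ) (hmeas : ∀ ρ > (0:ℝ), Measurable (f ρ))
    (p q c : ℝ) (hp : 0 < p) (hpγ : p < γ) (hγq : γ < q) (hc : 0 < c)
    (hsup : ∀ a > (0:ℝ), ∀ ε > (0:ℝ), ∀ᶠ ρ in 𝓝[>] (0:ℝ),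
      ∀ v > a, v ^ (-p) * (μ (Set.Ioi ρ⁻¹)).toReal * |f ρ v| ≤ ε)
    (hbound : ∀ ρ > (0:ℝ), ∀ v > (0:ℝ),
      (μ (Set.Ioi ρ⁻¹)).toReal * |f ρ v| ≤ c * v ^ q) :
    Tendsto
      (fun ρ : ℝ => ∫ v in Set.Ioi (0:ℝ), f ρ v ∂(Measure.map (fun x => ρ * x) μ))
      (𝓝[>] (0:ℝ)) (𝓝 0) :=
  regvar_family_limit_smallpow_general γ μ hpos hreg f p q c hp hpγ hγq hc hsup hbound
end

section
/- Let C be a bounded measurable subset of ℝᵈ whose topological boundary ∂C has Lebesgue measure zero. Then the Lebesgue measure of the symmetric difference |C Δ rC| tends to 0 as the real number r tends to 1, where rC = {rc : c ∈ C}. -/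
/-!
Up to the null set `frontier C`, every point `x` lies in `interior C` or outside `closure C`.
Both are open, so for `r` close to `1` the point `r⁻¹ • x` lies in the same one, and then `x`
is outside the measurable envelope `(closure C \ r • interior C) ∪ (r • closure C \ interior C)`
of `C ∆ r • C`. Hence the indicators of these envelopes tend to `0` almost everywhere, and
dominated convergence on a ball containing all of them concludes.
-/

open MeasureTheory Filter Topology Pointwise

theorem Set.symmDiff_subset_diff_union_diff {α : Type*} {s t u s' t' u' : Set α}
    (hsu : s ⊆ u) (hut : u ⊆ t) (hsu' : s' ⊆ u') (hut' : u' ⊆ t') :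
    symmDiff u u' ⊆ (t \ s') ∪ (t' \ s) := by
  rintro x (⟨hx, hx'⟩ | ⟨hx', hx⟩)
  · exact Or.inl ⟨hut hx, fun h ↦ hx' (hsu' h)⟩
  · exact Or.inr ⟨hut' hx', fun h ↦ hx (hsu h)⟩

theorem eventually_inv_smul_mem_of_mem_nhds {𝕜 E : Type*} [NormedField 𝕜] [AddCommGroup E]
    [TopologicalSpace E] [Module 𝕜 E] [ContinuousSMul 𝕜 E] {s : Set E} {x : E}
    (hs : s ∈ 𝓝 x) : ∀ᶠ r in 𝓝 (1 : 𝕜), r⁻¹ • x ∈ s := by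
  have hcont : ContinuousAt (fun r : 𝕜 ↦ r⁻¹ • x) 1 :=
    ((continuousAt_inv₀ one_ne_zero).smul continuousAt_const)
  exact hcont.preimage_mem_nhds (by simpa using hs)

section FrontierCrossing

variable {𝕜 E : Type*} [NormedField 𝕜] [NormedAddCommGroup E] [NormedSpace 𝕜 E]

/-- Written with preimages under `r⁻¹ • ·` rather than as `r • interior C`, `r • closure C`,
so that it is measurable also at `r = 0`. -/
def frontierCrossingSet (C : Set E) (r : 𝕜) : Set E :=
  (closure C \ (r⁻¹ • ·) ⁻¹' interior C) ∪ ((r⁻¹ • ·) ⁻¹' closure C \ interior C)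

theorem symmDiff_smul_subset_frontierCrossingSet (C : Set E) {r : 𝕜} (hr : r ≠ 0) :
    symmDiff C (r • C) ⊆ frontierCrossingSet C r := by
  rw [frontierCrossingSet, Set.preimage_smul_inv₀ hr, Set.preimage_smul_inv₀ hr]
  exact Set.symmDiff_subset_diff_union_diff interior_subset subset_closure
    (Set.smul_set_mono interior_subset) (Set.smul_set_mono subset_closure)

theorem measurableSet_frontierCrossingSet [MeasurableSpace E] [OpensMeasurableSpace E]
    (C : Set E) (r : 𝕜) : MeasurableSet (frontierCrossingSet C r) := by
  have hcont : Continuous (r⁻¹ • · : E → E) := continuous_const_smul _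
  exact (isClosed_closure.measurableSet.diff
      (isOpen_interior.preimage hcont).measurableSet).union
    ((isClosed_closure.preimage hcont).measurableSet.diff isOpen_interior.measurableSet)

theorem frontierCrossingSet_subset_closedBall {C : Set E} {R c : ℝ}
    (hC : closure C ⊆ Metric.closedBall 0 R) (hR : 0 ≤ R) (hc : 1 ≤ c)
    {r : 𝕜} (hr0 : r ≠ 0) (hr : ‖r‖ ≤ c) :
    frontierCrossingSet C r ⊆ Metric.closedBall 0 (c * R) := by
  simp only [Set.subset_def, Metric.mem_closedBall, dist_zero_right] at hC ⊢
  rintro x (⟨hx, -⟩ | ⟨hx, -⟩)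
  · nlinarith [hC x hx]
  · calc ‖x‖ = ‖r‖ * ‖r⁻¹ • x‖ := by rw [← norm_smul, smul_inv_smul₀ hr0]
      _ ≤ c * R := mul_le_mul hr (hC _ hx) (norm_nonneg _) (by linarith)

theorem eventually_notMem_frontierCrossingSet {C : Set E} {x : E} (hx : x ∉ frontier C) :
    ∀ᶠ r in 𝓝 (1 : 𝕜), x ∉ frontierCrossingSet C r := by
  by_cases hxC : x ∈ closure C
  · have hxi : x ∈ interior C := by_contra fun h ↦ hx ⟨hxC, h⟩
    filter_upwards [eventually_inv_smul_mem_of_mem_nhds (isOpen_interior.mem_nhds hxi)]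
      with r hr
    rintro (⟨-, h⟩ | ⟨-, h⟩)
    exacts [h hr, h hxi]
  · filter_upwards [eventually_inv_smul_mem_of_mem_nhds
      (isClosed_closure.isOpen_compl.mem_nhds hxC)] with r hr
    rintro (⟨h, -⟩ | ⟨h, -⟩)
    exacts [hxC h, hr h]

theorem tendsto_measure_frontierCrossingSet [ProperSpace E] [MeasurableSpace E]
    [OpensMeasurableSpace E] (μ : Measure E) [IsFiniteMeasureOnCompacts μ] {C : Set E}
    (hCb : Bornology.IsBounded C) (hCfr : μ (frontier C) = 0) :
    Tendsto (fun r : 𝕜 ↦ μ (frontierCrossingSet C r)) (𝓝 1) (𝓝 0) := by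
  obtain ⟨R, hR, hRC⟩ : ∃ R, 0 ≤ R ∧ closure C ⊆ Metric.closedBall 0 R := by
    obtain ⟨R, hR⟩ := hCb.closure.subset_closedBall 0
    exact ⟨max R 0, le_max_right _ _,
      hR.trans (Metric.closedBall_subset_closedBall (le_max_left _ _))⟩
  have hsmall : ∀ᶠ r : 𝕜 in 𝓝 1, r ≠ 0 ∧ ‖r‖ ≤ 2 := by
    refine (eventually_ne_nhds one_ne_zero).and ?_
    exact (continuous_norm.tendsto (1 : 𝕜)).eventually (eventually_le_nhds (by norm_num))
  have hlim : ∀ᵐ x ∂μ, ∀ᶠ r : 𝕜 in 𝓝 1, x ∈ frontierCrossingSet C r ↔ x ∈ (∅ : Set E) := by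
    filter_upwards [measure_eq_zero_iff_ae_notMem.mp hCfr] with x hx
    filter_upwards [eventually_notMem_frontierCrossingSet hx] with r hr
    simpa using hr
  simpa using tendsto_measure_of_ae_tendsto_indicator (𝓝 1) MeasurableSet.empty
    (measurableSet_frontierCrossingSet C) measurableSet_closedBall
    measure_closedBall_lt_top.ne
    (hsmall.mono fun r hr ↦ frontierCrossingSet_subset_closedBall hRC hR one_le_two hr.1 hr.2)
    hlim

end FrontierCrossing

theorem tendsto_measure_symmDiff_smul_nhds_one {E : Type*} [NormedAddCommGroup E]
    [NormedSpace ℝ E] [ProperSpace E] [MeasurableSpace E] [OpensMeasurableSpace E]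
    (μ : Measure E) [IsFiniteMeasureOnCompacts μ] {C : Set E}
    (hCb : Bornology.IsBounded C) (hCfr : μ (frontier C) = 0) :
    Tendsto (fun r : ℝ ↦ μ (symmDiff C (r • C))) (𝓝 1) (𝓝 0) := by
  refine tendsto_of_tendsto_of_tendsto_of_le_of_le' tendsto_const_nhds
    (tendsto_measure_frontierCrossingSet μ hCb hCfr) (Eventually.of_forall fun _ ↦ zero_le) ?_
  filter_upwards [eventually_ne_nhds one_ne_zero] with r hr
  exact measure_mono (symmDiff_smul_subset_frontierCrossingSet C hr)

theorem symmDiff_scaling_tendsto_zero_general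
    (d : ℕ)
    (C : Set (EuclideanSpace ℝ (Fin d)))
    (hCb : Bornology.IsBounded C)
    (hCfr : volume (frontier C) = 0) :
    Tendsto (fun r : ℝ => volume (symmDiff C (r • C))) (𝓝 (1:ℝ)) (𝓝 0) :=
  tendsto_measure_symmDiff_smul_nhds_one volume hCb hCfr

theorem symmDiff_scaling_tendsto_zero
    (d : ℕ) (hd : 0 < d)
    (C : Set (EuclideanSpace ℝ (Fin d)))
    (hCm : MeasurableSet C) (hCb : Bornology.IsBounded C)
    (hCfr : volume (frontier C) = 0) :
    Tendsto (fun r : ℝ => volume (symmDiff C (r • C))) (𝓝 (1:ℝ)) (𝓝 0) :=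
  symmDiff_scaling_tendsto_zero_general d C hCb hCfr
end

section
/- Let C be a bounded measurable subset of ℝᵈ whose topological boundary ∂C has Lebesgue measure zero, and let φ be a finite signed measure on ℝᵈ. Then the function v ↦ ∫_{ℝᵈ} φ(x + v^{1/d}C)² dx is continuous on (0,∞). -/
/-!
Put `F r = ∫ φ(x + r • C)² dx`; as `v ↦ v^{1/d}` is continuous and positive on `(0, ∞)`, it
suffices that `F` is continuous at every `r₀ ≠ 0`. By Tonelli and translation invariance,
`∫ ν(x + s) dx = ν(univ) · vol(s)` for a finite measure `ν`. Taking `ν = |φ|` and `s` a ball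
containing `r • C` for all `r` near `r₀` gives the integrable majorant
`φ(x + r • C)² ≤ |φ|(univ) · |φ|(x + s)`; taking `s = r₀ • ∂C`, a Lebesgue-null set, gives
`|φ|(x + r₀ • ∂C) = 0` for a.e. `x`. For such `x`, whether `y ∈ x + r • C` is eventually constant
in `r → r₀` for `|φ|`-a.e. `y`, so `φ(x + r • C) → φ(x + r₀ • C)`, and dominated convergence
concludes.
-/

open MeasureTheory Filter Topology Pointwise

section Translates

variable {G : Type*} [AddCommGroup G] [MeasurableSpace G] {s : Set G}

lemma measure_vadd_eq_measure_prodMk_preimage (ν : Measure G) (x : G) :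
    ν (x +ᵥ s) = ν (Prod.mk x ⁻¹' {p : G × G | p.2 - p.1 ∈ s}) := by
  congr 1
  ext y
  simp [Set.mem_vadd_set_iff_neg_vadd_mem, neg_add_eq_sub]

variable [MeasurableAdd₂ G] [MeasurableNeg G]

lemma measurable_measure_vadd (ν : Measure G) [SFinite ν] (hs : MeasurableSet s) :
    Measurable fun x : G => ν (x +ᵥ s) := by
  simp_rw [measure_vadd_eq_measure_prodMk_preimage]
  exact measurable_measure_prodMk_left (hs.preimage (measurable_snd.sub measurable_fst))

lemma lintegral_measure_vadd (μ ν : Measure G) [SFinite μ] [SFinite ν] [μ.IsAddLeftInvariant]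
    [μ.IsNegInvariant] (hs : MeasurableSet s) :
    ∫⁻ x, ν (x +ᵥ s) ∂μ = ν Set.univ * μ s := by
  have hS : MeasurableSet {p : G × G | p.2 - p.1 ∈ s} :=
    hs.preimage (measurable_snd.sub measurable_fst)
  simp_rw [measure_vadd_eq_measure_prodMk_preimage, ← Measure.prod_apply hS,
    Measure.prod_apply_symm hS]
  have hμ : ∀ y, μ ((fun x => (x, y)) ⁻¹' {p : G × G | p.2 - p.1 ∈ s}) = μ s := fun y =>
    (Measure.measurePreserving_sub_left μ y).measure_preimage hs.nullMeasurableSet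
  simp_rw [hμ, lintegral_const, mul_comm]

lemma ae_measure_vadd_eq_zero (μ ν : Measure G) [SFinite μ] [SFinite ν] [μ.IsAddLeftInvariant]
    [μ.IsNegInvariant] {t : Set G} (ht : μ t = 0) : ∀ᵐ x ∂μ, ν (x +ᵥ t) = 0 := by
  obtain ⟨t', htt', ht'm, ht'0⟩ := exists_measurable_superset_of_null ht
  have hint : ∫⁻ x, ν (x +ᵥ t') ∂μ = 0 := by rw [lintegral_measure_vadd μ ν ht'm, ht'0, mul_zero]
  filter_upwards [(lintegral_eq_zero_iff (measurable_measure_vadd ν ht'm)).mp hint] with x hx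
  exact measure_mono_null (Set.vadd_set_mono htt') hx

lemma integrable_measureReal_vadd (μ ν : Measure G) [SFinite μ] [IsFiniteMeasure ν]
    [μ.IsAddLeftInvariant] [μ.IsNegInvariant] (hs : MeasurableSet s) (hμs : μ s ≠ ⊤) :
    Integrable (fun x => ν.real (x +ᵥ s)) μ := by
  refine integrable_toReal_of_lintegral_ne_top (measurable_measure_vadd ν hs).aemeasurable ?_
  rw [lintegral_measure_vadd μ ν hs]
  exact ENNReal.mul_ne_top (measure_ne_top ν _) hμs

end Translates

lemma eventually_mem_iff_of_notMem_frontier {X : Type*} [TopologicalSpace X] {s : Set X} {a : X}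
    (ha : a ∉ frontier s) : ∀ᶠ z in 𝓝 a, z ∈ s ↔ a ∈ s := by
  by_cases has : a ∈ s
  · have hint : a ∈ interior s := by_contra fun h => ha ⟨subset_closure has, h⟩
    filter_upwards [mem_interior_iff_mem_nhds.mp hint] with z hz
    simp [hz, has]
  · have hcl : a ∉ closure s := fun h => ha ⟨h, fun h' => has (interior_subset h')⟩
    filter_upwards [isClosed_closure.isOpen_compl.mem_nhds hcl] with z hz
    simpa [has] using fun h => hz (subset_closure h)

lemma eventually_mem_vadd_smul_iff {𝕜 E : Type*} [NormedField 𝕜] [AddCommGroup E]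
    [TopologicalSpace E] [Module 𝕜 E] [ContinuousSMul 𝕜 E] {C : Set E} {r₀ : 𝕜} (hr₀ : r₀ ≠ 0)
    {x y : E} (hy : y ∉ x +ᵥ r₀ • frontier C) :
    ∀ᶠ r in 𝓝 r₀, y ∈ x +ᵥ r • C ↔ y ∈ x +ᵥ r₀ • C := by
  have hmem : ∀ {r : 𝕜} (S : Set E), r ≠ 0 → (y ∈ x +ᵥ r • S ↔ r⁻¹ • (-x + y) ∈ S) :=
    fun S hr => by rw [Set.mem_vadd_set_iff_neg_vadd_mem, Set.mem_smul_set_iff_inv_smul_mem₀ hr,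
      vadd_eq_add]
  have hlim : Tendsto (fun r : 𝕜 => r⁻¹ • (-x + y)) (𝓝 r₀) (𝓝 (r₀⁻¹ • (-x + y))) :=
    (tendsto_inv₀ hr₀).smul_const _
  have hfr : r₀⁻¹ • (-x + y) ∉ frontier C := by rwa [← hmem _ hr₀]
  filter_upwards [hlim.eventually (eventually_mem_iff_of_notMem_frontier hfr),
    eventually_ne_nhds hr₀] with r hr hr0
  rw [hmem C hr0, hmem C hr₀, hr]

namespace MeasureTheory.SignedMeasure

variable {α : Type*} [MeasurableSpace α] (φ : SignedMeasure α)

lemma measurable_apply_vadd [AddCommGroup α] [MeasurableAdd₂ α] [MeasurableNeg α] {s : Set α}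
    (hs : MeasurableSet s) : Measurable fun x : α => φ (x +ᵥ s) := by
  have h : (fun x : α => φ (x +ᵥ s)) = fun x => φ.toJordanDecomposition.posPart.real (x +ᵥ s) -
      φ.toJordanDecomposition.negPart.real (x +ᵥ s) :=
    funext fun x => φ.apply_eq_posPart_real_sub_negPart_real (hs.const_vadd x)
  rw [h]
  exact (measurable_measure_vadd _ hs).ennreal_toReal.sub
    (measurable_measure_vadd _ hs).ennreal_toReal

lemma sq_apply_le_totalVariation_real_univ_mul {s t : Set α} (hst : s ⊆ t) :
    φ s ^ 2 ≤ φ.totalVariation.real Set.univ * φ.totalVariation.real t := by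
  have h := φ.norm_le_totalVariation s
  rw [sq, ← abs_mul_abs_self, ← Real.norm_eq_abs]
  exact mul_le_mul (h.trans (measureReal_mono (Set.subset_univ s)))
    (h.trans (measureReal_mono hst)) (norm_nonneg _) measureReal_nonneg

lemma tendsto_apply_of_ae_eventually_mem_iff {ι : Type*} {L : Filter ι} [L.IsCountablyGenerated]
    {As : ι → Set α} {A : Set α} (hA : MeasurableSet A) (hAs : ∀ i, MeasurableSet (As i))
    (h_lim : ∀ᵐ x ∂φ.totalVariation, ∀ᶠ i in L, x ∈ As i ↔ x ∈ A) :
    Tendsto (fun i => φ (As i)) L (𝓝 (φ A)) := by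
  have hpos : φ.toJordanDecomposition.posPart ≪ φ.totalVariation :=
    Measure.absolutelyContinuous_of_le (Measure.le_add_right le_rfl)
  have hneg : φ.toJordanDecomposition.negPart ≪ φ.totalVariation :=
    Measure.absolutelyContinuous_of_le (Measure.le_add_left le_rfl)
  simp_rw [φ.apply_eq_posPart_real_sub_negPart_real (hAs _),
    φ.apply_eq_posPart_real_sub_negPart_real hA]
  exact ((ENNReal.tendsto_toReal (measure_ne_top _ _)).comp
    (tendsto_measure_of_ae_tendsto_indicator_of_isFiniteMeasure L hA hAs (hpos.ae_le h_lim))).sub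
    ((ENNReal.tendsto_toReal (measure_ne_top _ _)).comp
    (tendsto_measure_of_ae_tendsto_indicator_of_isFiniteMeasure L hA hAs (hneg.ae_le h_lim)))

end MeasureTheory.SignedMeasure

open Metric in
theorem continuousAt_integral_sq_signedMeasure_vadd_smul {E : Type*} [NormedAddCommGroup E]
    [NormedSpace ℝ E] [FiniteDimensional ℝ E] [MeasurableSpace E] [BorelSpace E] (μ : Measure E)
    [μ.IsAddHaarMeasure] {C : Set E} (hCm : MeasurableSet C) (hCb : Bornology.IsBounded C)
    (hCfr : μ (frontier C) = 0) (φ : SignedMeasure E) {r₀ : ℝ} (hr₀ : r₀ ≠ 0) :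
    ContinuousAt (fun r : ℝ => ∫ x, φ (x +ᵥ r • C) ^ 2 ∂μ) r₀ := by
  set ν := φ.totalVariation
  obtain ⟨M, hM, hCM⟩ := hCb.subset_closedBall_lt 0 0
  set B := closedBall (0 : E) ((‖r₀‖ + 1) * M)
  have hsub : ∀ᶠ r in 𝓝 r₀, r • C ⊆ B := by
    filter_upwards [closedBall_mem_nhds r₀ one_pos] with r hr
    calc r • C ⊆ r • closedBall 0 M := Set.smul_set_mono hCM
      _ = closedBall 0 (‖r‖ * M) := by rw [smul_closedBall r 0 hM.le, smul_zero]
      _ ⊆ B := closedBall_subset_closedBall (by gcongr; exact norm_le_norm_add_const_of_dist_le hr)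
  refine tendsto_integral_filter_of_dominated_convergence
    (fun x => ν.real Set.univ * ν.real (x +ᵥ B)) ?_ ?_ ?_ ?_
  · exact Eventually.of_forall fun r =>
      ((φ.measurable_apply_vadd (hCm.const_smul₀ r)).pow_const 2).aestronglyMeasurable
  · filter_upwards [hsub] with r hr
    refine Eventually.of_forall fun x => ?_
    rw [Real.norm_eq_abs, abs_of_nonneg (sq_nonneg _)]
    exact φ.sq_apply_le_totalVariation_real_univ_mul (Set.vadd_set_mono hr)
  · exact (integrable_measureReal_vadd μ ν measurableSet_closedBall
      measure_closedBall_lt_top.ne).const_mul _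
  · have hnull : μ (r₀ • frontier C) = 0 := by rw [Measure.addHaar_smul, hCfr, mul_zero]
    filter_upwards [ae_measure_vadd_eq_zero μ ν hnull] with x hx
    refine (φ.tendsto_apply_of_ae_eventually_mem_iff ((hCm.const_smul₀ r₀).const_vadd x)
      (fun r => (hCm.const_smul₀ r).const_vadd x) ?_).pow 2
    filter_upwards [measure_eq_zero_iff_ae_notMem.mp hx] with y hy
    exact eventually_mem_vadd_smul_iff hr₀ hy

theorem continuity_of_square_integral_general
    (d : ℕ)
    (C : Set (EuclideanSpace ℝ (Fin d)))
    (hCm : MeasurableSet C) (hCb : Bornology.IsBounded C)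
    (hCfr : volume (frontier C) = 0)
    (φ : MeasureTheory.SignedMeasure (EuclideanSpace ℝ (Fin d))) :
    ContinuousOn
      (fun v : ℝ => ∫ x, (φ (x +ᵥ (v ^ ((d:ℝ)⁻¹) • C))) ^ 2
        ∂(volume : Measure (EuclideanSpace ℝ (Fin d))))
      (Set.Ioi 0) := by
  intro v hv
  have hr : v ^ (d : ℝ)⁻¹ ≠ 0 := (Real.rpow_pos_of_pos hv _).ne'
  exact (continuousAt_integral_sq_signedMeasure_vadd_smul volume hCm hCb hCfr φ hr
    ).comp_continuousWithinAt (f := fun v : ℝ => v ^ (d : ℝ)⁻¹)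
    (Real.continuousAt_rpow_const v _ (Or.inl (ne_of_gt hv))).continuousWithinAt

theorem continuity_of_square_integral
    (d : ℕ) (hd : 0 < d)
    (C : Set (EuclideanSpace ℝ (Fin d)))
    (hCm : MeasurableSet C) (hCb : Bornology.IsBounded C)
    (hCfr : volume (frontier C) = 0)
    (φ : MeasureTheory.SignedMeasure (EuclideanSpace ℝ (Fin d))) :
    ContinuousOn
      (fun v : ℝ => ∫ x, (φ (x +ᵥ (v ^ ((d:ℝ)⁻¹) • C))) ^ 2
        ∂(volume : Measure (EuclideanSpace ℝ (Fin d))))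
      (Set.Ioi 0) :=
  continuity_of_square_integral_general d C hCm hCb hCfr φ
end

section
/- Let C be a bounded measurable subset of ℝᵈ, let α ∈ (0,1), and let φ be a finite signed measure on ℝᵈ with finite α-Riesz energy. Then there exists a constant c > 0 such that for all v > 0, ∫_{ℝᵈ} φ(x + v^{1/d}C)² dx ≤ c · min(v, v^{2−α}). -/
open MeasureTheory Pointwise
open scoped ENNReal

/-! Since `|φ| ≤ μ := φ.totalVariation`, it suffices to bound `∫ μ(x + A)² dx`, which by Tonelli is
the `μ ⊗ μ`-integral of the volume of the overlap `(y - A) ∩ (z - A)`. That overlap has volume at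
most `vol A`, and it is empty unless `‖y - z‖ ≤ 2ρ` when `A ⊆ closedBall 0 ρ`, so it is also at
most `vol A · (2ρ)ˢ ‖y - z‖⁻ˢ`. For `A = v^{1/d} • C` we have `vol A = v · vol C` and `ρ ∝ v^{1/d}`;
with `s = (1 - α) d` the two bounds are of order `v` and `v^{2-α}`. -/

theorem Set.mem_vadd_neg_set_iff {G : Type*} [AddGroup G] {x y : G} {A : Set G} :
    x ∈ y +ᵥ -A ↔ y ∈ x +ᵥ A := by
  simp [Set.mem_vadd_set_iff_neg_vadd_mem, neg_add_rev]

theorem norm_sub_le_of_vadd_neg_inter_nonempty {E : Type*} [SeminormedAddCommGroup E]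
    {A : Set E} {ρ : ℝ} (hA : A ⊆ Metric.closedBall 0 ρ) {y z : E}
    (h : ((y +ᵥ -A) ∩ (z +ᵥ -A)).Nonempty) :
    ‖y - z‖ ≤ 2 * ρ := by
  obtain ⟨x, hy, hz⟩ := h
  rw [Set.mem_vadd_neg_set_iff, Set.mem_vadd_set_iff_neg_vadd_mem, vadd_eq_add] at hy hz
  calc ‖y - z‖ = ‖(-x + y) - (-x + z)‖ := by congr 1; abel
    _ ≤ ‖-x + y‖ + ‖-x + z‖ := norm_sub_le _ _
    _ ≤ 2 * ρ := by
      linarith [mem_closedBall_zero_iff.1 (hA hy), mem_closedBall_zero_iff.1 (hA hz)]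

theorem ENNReal.one_le_rpow_mul_rpow_neg {a b : ℝ≥0∞} (hba : b ≤ a) (ha : a ≠ 0)
    (hb : b ≠ ⊤) {s : ℝ} (hs : 0 < s) : 1 ≤ a ^ s * b ^ (-s) := by
  rw [ENNReal.rpow_neg, ← div_eq_mul_inv, ENNReal.le_div_iff_mul_le
    (.inr (ENNReal.rpow_pos_of_nonneg (pos_iff_ne_zero.2 ha) hs.le).ne')
    (.inl (ENNReal.rpow_ne_top_of_nonneg hs.le hb)), one_mul]
  exact ENNReal.rpow_le_rpow hba hs.le

theorem ENNReal.toReal_le_mul_of_le_ofReal_mul {a K : ℝ≥0∞} {c t : ℝ}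
    (h : a ≤ ENNReal.ofReal t * K) (hK : K ≠ ⊤) (hKc : K.toReal ≤ c) (ht : 0 ≤ t) :
    a.toReal ≤ c * t :=
  calc a.toReal ≤ (ENNReal.ofReal t * K).toReal := ENNReal.toReal_mono (by finiteness) h
    _ = K.toReal * t := by rw [ENNReal.toReal_mul, ENNReal.toReal_ofReal ht, mul_comm]
    _ ≤ c * t := mul_le_mul_of_nonneg_right hKc ht

namespace MeasureTheory

theorem SignedMeasure.integral_sq_apply_le_toReal_lintegral {X Y : Type*} [MeasurableSpace X]
    [MeasurableSpace Y] (φ : SignedMeasure X) (ν : Measure Y) (s : Y → Set X)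
    (h : ∫⁻ y, φ.totalVariation (s y) ^ 2 ∂ν ≠ ⊤) :
    ∫ y, φ (s y) ^ 2 ∂ν ≤ (∫⁻ y, φ.totalVariation (s y) ^ 2 ∂ν).toReal := by
  refine (Real.le_norm_self _).trans <| (norm_integral_le_lintegral_norm _).trans <|
    ENNReal.toReal_mono h <| lintegral_mono fun y => ?_
  rw [ofReal_norm, enorm_pow]
  exact pow_le_pow_left' (φ.enorm_le_totalVariation _) 2

theorem lintegral_measure_vadd_sq_eq_lintegral_prod {G : Type*} [AddGroup G] [MeasurableSpace G]
    [MeasurableAdd₂ G] [MeasurableNeg G] (ν μ : Measure G) [SFinite ν] [SFinite μ] {A : Set G}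
    (hA : MeasurableSet A) :
    ∫⁻ x, μ (x +ᵥ A) ^ 2 ∂ν = ∫⁻ q, ν ((q.1 +ᵥ -A) ∩ (q.2 +ᵥ -A)) ∂μ.prod μ := by
  set T : Set (G × G × G) := {p | p.2.1 ∈ p.1 +ᵥ A ∧ p.2.2 ∈ p.1 +ᵥ A}
  have hT : MeasurableSet T := by
    simp only [T, Set.mem_vadd_set_iff_neg_vadd_mem, vadd_eq_add]
    exact ((measurable_fst.neg.add (measurable_fst.comp measurable_snd)) hA).inter
      ((measurable_fst.neg.add (measurable_snd.comp measurable_snd)) hA)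
  calc ∫⁻ x, μ (x +ᵥ A) ^ 2 ∂ν = ν.prod (μ.prod μ) T := by
        rw [Measure.prod_apply hT]
        refine lintegral_congr fun x => ?_
        rw [sq, ← Measure.prod_prod]
        rfl
    _ = _ := by
        rw [Measure.prod_apply_symm hT]
        refine lintegral_congr fun q => congrArg ν <| Set.ext fun x => ?_
        simp [T]

noncomputable def rieszEnergy {E : Type*} [NormedAddCommGroup E] [MeasurableSpace E]
    (μ : Measure E) (s : ℝ) : ℝ≥0∞ :=
  ∫⁻ x, ∫⁻ y, ‖x - y‖ₑ ^ (-s) ∂μ ∂μ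

section Overlap

variable {E : Type*} [NormedAddCommGroup E] [MeasurableSpace E] [BorelSpace E]
  (ν μ : Measure E) [ν.IsAddLeftInvariant] [ν.IsNegInvariant]

theorem measure_vadd_neg_inter_le_mul_rpow {A : Set E} {ρ : ℝ} (hρ : 0 < ρ)
    (hA : A ⊆ Metric.closedBall 0 ρ) {s : ℝ} (hs : 0 < s) (y z : E) :
    ν ((y +ᵥ -A) ∩ (z +ᵥ -A)) ≤ ν A * (ENNReal.ofReal (2 * ρ) ^ s * ‖y - z‖ₑ ^ (-s)) := by
  rcases ((y +ᵥ -A) ∩ (z +ᵥ -A)).eq_empty_or_nonempty with h | h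
  · simp [h]
  calc ν ((y +ᵥ -A) ∩ (z +ᵥ -A)) ≤ ν (y +ᵥ -A) := measure_mono Set.inter_subset_left
    _ = ν A := by rw [measure_vadd, Measure.measure_neg]
    _ ≤ _ := by
      refine le_mul_of_one_le_right' <|
        ENNReal.one_le_rpow_mul_rpow_neg ?_ (by simpa using hρ) enorm_ne_top hs
      rw [← ofReal_norm]
      exact ENNReal.ofReal_le_ofReal (norm_sub_le_of_vadd_neg_inter_nonempty hA h)

variable [SecondCountableTopology E] [SFinite ν] [SFinite μ]

theorem lintegral_measure_vadd_sq_le {A : Set E} (hA : MeasurableSet A) :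
    ∫⁻ x, μ (x +ᵥ A) ^ 2 ∂ν ≤ ν A * μ Set.univ ^ 2 := by
  rw [lintegral_measure_vadd_sq_eq_lintegral_prod ν μ hA]
  calc ∫⁻ q, ν ((q.1 +ᵥ -A) ∩ (q.2 +ᵥ -A)) ∂μ.prod μ ≤ ∫⁻ _, ν A ∂μ.prod μ :=
        lintegral_mono fun q => (measure_mono Set.inter_subset_left).trans
          (by rw [measure_vadd, Measure.measure_neg])
    _ = ν A * μ Set.univ ^ 2 := by
        rw [lintegral_const, ← Set.univ_prod_univ, Measure.prod_prod, sq]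

theorem lintegral_measure_vadd_sq_le_rieszEnergy {A : Set E} (hA : MeasurableSet A) {ρ : ℝ}
    (hρ : 0 < ρ) (hAρ : A ⊆ Metric.closedBall 0 ρ) {s : ℝ} (hs : 0 < s) :
    ∫⁻ x, μ (x +ᵥ A) ^ 2 ∂ν ≤ ν A * ENNReal.ofReal (2 * ρ) ^ s * rieszEnergy μ s := by
  have hm : Measurable fun q : E × E => ‖q.1 - q.2‖ₑ ^ (-s) := by fun_prop
  rw [lintegral_measure_vadd_sq_eq_lintegral_prod ν μ hA, rieszEnergy,
    ← lintegral_prod _ hm.aemeasurable, ← lintegral_const_mul _ hm]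
  exact lintegral_mono fun q => (measure_vadd_neg_inter_le_mul_rpow ν hρ hAρ hs q.1 q.2).trans_eq
    (mul_assoc ..).symm

end Overlap

section Scaling

variable {E : Type*} [NormedAddCommGroup E] [NormedSpace ℝ E] [MeasurableSpace E] [BorelSpace E]
  [FiniteDimensional ℝ E] (ν : Measure E) [ν.IsAddHaarMeasure] (μ : Measure E) [SFinite μ]
  {C : Set E} {r : ℝ}

theorem lintegral_measure_vadd_smul_sq_le (hC : MeasurableSet C) (hr : 0 ≤ r) :
    ∫⁻ x, μ (x +ᵥ r • C) ^ 2 ∂ν ≤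
      ENNReal.ofReal (r ^ Module.finrank ℝ E) * (ν C * μ Set.univ ^ 2) := by
  rw [← mul_assoc, ← Measure.addHaar_smul_of_nonneg ν hr]
  exact lintegral_measure_vadd_sq_le ν μ (hC.const_smul₀ r)

theorem lintegral_measure_vadd_smul_sq_le_rieszEnergy (hC : MeasurableSet C) (hr : 0 < r)
    {ρ : ℝ} (hρ : 0 < ρ) (hCρ : C ⊆ Metric.closedBall 0 ρ) {s : ℝ} (hs : 0 < s) :
    ∫⁻ x, μ (x +ᵥ r • C) ^ 2 ∂ν ≤ ENNReal.ofReal (r ^ (Module.finrank ℝ E + s)) *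
      (ν C * ENNReal.ofReal (2 * ρ) ^ s * rieszEnergy μ s) := by
  have hrC : r • C ⊆ Metric.closedBall 0 (r * ρ) := by
    simpa [smul_closedBall _ _ hρ.le, abs_of_pos hr] using Set.smul_set_mono (a := r) hCρ
  refine (lintegral_measure_vadd_sq_le_rieszEnergy ν μ (hC.const_smul₀ r) (mul_pos hr hρ) hrC
    hs).trans_eq ?_
  rw [Measure.addHaar_smul_of_nonneg ν hr.le, show 2 * (r * ρ) = r * (2 * ρ) by ring,
    ENNReal.ofReal_mul hr.le, ENNReal.mul_rpow_of_nonneg _ _ hs.le,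
    ENNReal.ofReal_rpow_of_nonneg hr.le hs.le, Real.rpow_add hr, Real.rpow_natCast,
    ENNReal.ofReal_mul (pow_nonneg hr.le _)]
  ring

end Scaling

end MeasureTheory

theorem square_integral_bound_riesz_general
    (d : ℕ) (hd : 0 < d)
    (C : Set (EuclideanSpace ℝ (Fin d)))
    (hCm : MeasurableSet C) (hCb : Bornology.IsBounded C)
    (α : ℝ) (hα1 : α < 1)
    (φ : MeasureTheory.SignedMeasure (EuclideanSpace ℝ (Fin d)))
    (henergy : ∫⁻ x, ∫⁻ y, (‖x - y‖₊ : ℝ≥0∞) ^ (-(1 - α) * (d:ℝ))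
        ∂φ.totalVariation ∂φ.totalVariation < ⊤) :
    ∃ c > (0:ℝ), ∀ v > (0:ℝ),
      (∫ x, (φ (x +ᵥ (v ^ ((d:ℝ)⁻¹) • C))) ^ 2
        ∂(volume : Measure (EuclideanSpace ℝ (Fin d))))
      ≤ c * min v (v ^ (2 - α)) := by
  obtain ⟨ρ, hρ, hCρ⟩ := hCb.subset_closedBall_lt 0 0
  set μ := φ.totalVariation
  set s := (1 - α) * d
  have hs : 0 < s := mul_pos (by linarith) (by exact_mod_cast hd)
  have hE : rieszEnergy μ s ≠ ⊤ := by rw [neg_mul] at henergy; exact henergy.ne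
  have hC : volume C ≠ ⊤ := hCb.measure_lt_top.ne
  set K₁ := volume C * μ Set.univ ^ 2
  set K₂ := volume C * ENNReal.ofReal (2 * ρ) ^ s * rieszEnergy μ s
  have hK₁ : K₁ ≠ ⊤ := by finiteness
  have hK₂ : K₂ ≠ ⊤ := by finiteness
  refine ⟨K₁.toReal + K₂.toReal + 1, by positivity, fun v hv => ?_⟩
  set r := v ^ (d : ℝ)⁻¹
  have hr : 0 < r := by positivity
  have hdim : Module.finrank ℝ (EuclideanSpace ℝ (Fin d)) = d := finrank_euclideanSpace_fin
  have hrd : r ^ d = v := by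
    rw [← Real.rpow_natCast, ← Real.rpow_mul hv.le, inv_mul_cancel₀ (by positivity), Real.rpow_one]
  have hrds : r ^ ((d : ℝ) + s) = v ^ (2 - α) := by
    rw [← Real.rpow_mul hv.le]; congr 1; field_simp; ring
  have hI₁ := lintegral_measure_vadd_smul_sq_le volume μ hCm hr.le
  have hI₂ := lintegral_measure_vadd_smul_sq_le_rieszEnergy volume μ hCm hr hρ hCρ hs
  rw [hdim, hrd] at hI₁
  rw [hdim, hrds] at hI₂
  rw [mul_min_of_nonneg _ _ (by positivity)]
  refine (φ.integral_sq_apply_le_toReal_lintegral _ _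
    (ne_top_of_le_ne_top (by finiteness) hI₁)).trans (le_min ?_ ?_)
  · exact ENNReal.toReal_le_mul_of_le_ofReal_mul hI₁ hK₁ (by linarith [K₂.toReal_nonneg]) hv.le
  · exact ENNReal.toReal_le_mul_of_le_ofReal_mul hI₂ hK₂ (by linarith [K₁.toReal_nonneg])
      (by positivity)

theorem square_integral_bound_riesz
    (d : ℕ) (hd : 0 < d)
    (C : Set (EuclideanSpace ℝ (Fin d)))
    (hCm : MeasurableSet C) (hCb : Bornology.IsBounded C)
    (α : ℝ) (hα0 : 0 < α) (hα1 : α < 1)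
    (φ : MeasureTheory.SignedMeasure (EuclideanSpace ℝ (Fin d)))
    (henergy : ∫⁻ x, ∫⁻ y, (‖x - y‖₊ : ℝ≥0∞) ^ (-(1 - α) * (d:ℝ))
        ∂φ.totalVariation ∂φ.totalVariation < ⊤) :
    ∃ c > (0:ℝ), ∀ v > (0:ℝ),
      (∫ x, (φ (x +ᵥ (v ^ ((d:ℝ)⁻¹) • C))) ^ 2
        ∂(volume : Measure (EuclideanSpace ℝ (Fin d))))
      ≤ c * min v (v ^ (2 - α)) :=
  square_integral_bound_riesz_general d hd C hCm hCb α hα1 φ henergy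
end

section
/- Suppose C is invariant under rotations, i.e. θ(C) = C for every θ in the special orthogonal group SO(d). Then for every x ∈ ℝᵈ with x ≠ 0 and every unit vector e₁ ∈ ℝᵈ, K_{γ,C}(x) = K_{γ,C}(e₁) · |x|^{−(γ−1)d}, as an equality in [0,∞]. -/
/-!
Substituting `v = ‖x‖ ^ d * w` in the defining integral turns `K(x)` into
`‖x‖ ^ (d (1 - γ)) · K(x / ‖x‖)`, so it remains to see that `K` is constant on the unit sphere.
For unit vectors `e, u` there is a rotation `θ` with `θ e = ± u`; rotations preserve volume and
`C`, and `|(-a + C) ∩ C| = |(a + C) ∩ C|` by translating by `a`, so the integrands at `u` and `e`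
agree pointwise.
-/

open MeasureTheory Filter Topology Pointwise
open scoped ENNReal NNReal

noncomputable def rieszKernel (d : ℕ) (γ : ℝ) (C : Set (EuclideanSpace ℝ (Fin d)))
    (x : EuclideanSpace ℝ (Fin d)) : ℝ≥0∞ :=
  ∫⁻ v in Set.Ioi (0:ℝ),
    volume (((v ^ (-(d:ℝ)⁻¹)) • x +ᵥ C) ∩ C) * ENNReal.ofReal (v ^ (-γ))

theorem measure_neg_vadd_inter_self {G : Type*} [AddGroup G] [MeasurableSpace G] (μ : Measure G)
    [μ.IsAddLeftInvariant] (s : Set G) (a : G) :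
    μ ((-a +ᵥ s) ∩ s) = μ ((a +ᵥ s) ∩ s) := by
  rw [← measure_vadd μ a, Set.vadd_set_inter, vadd_neg_vadd, Set.inter_comm]

theorem volume_map_vadd_inter_self {E : Type*} [NormedAddCommGroup E] [InnerProductSpace ℝ E]
    [FiniteDimensional ℝ E] [MeasurableSpace E] [BorelSpace E]
    (θ : E ≃ₗᵢ[ℝ] E) {s : Set E} (hs : θ '' s = s) (a : E) :
    volume ((θ a +ᵥ s) ∩ s) = volume ((a +ᵥ s) ∩ s) := by
  have himage : θ '' ((a +ᵥ s) ∩ s) = (θ a +ᵥ s) ∩ s := by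
    rw [Set.image_inter θ.injective, Set.image_vadd_distrib, hs]
  rw [← himage, θ.image_eq_preimage_symm]
  exact θ.symm.measurePreserving.measure_preimage_emb θ.symm.toMeasurableEquiv.measurableEmbedding _

section Rotation

variable {E : Type*} [NormedAddCommGroup E] [InnerProductSpace ℝ E] [FiniteDimensional ℝ E]

theorem det_reflection_orthogonal_singleton {v : E} (hv : v ≠ 0) :
    LinearMap.det (ℝ ∙ v)ᗮ.reflection.toLinearMap = -1 := by
  rw [Submodule.det_reflection, Submodule.orthogonal_orthogonal, finrank_span_singleton hv,
    pow_one]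

/-- In dimension one `e ↦ -e` is not a rotation, which is why the sign is allowed. -/
theorem exists_det_eq_one_apply_eq_or_apply_eq_neg {e u : E} (he : ‖e‖ = 1) (hu : ‖u‖ = 1) :
    ∃ θ : E ≃ₗᵢ[ℝ] E, LinearMap.det θ.toLinearMap = 1 ∧ (θ e = u ∨ θ e = -u) := by
  obtain rfl | hue := eq_or_ne e u
  · exact ⟨LinearIsometryEquiv.refl ℝ E, LinearMap.det_id, Or.inl rfl⟩
  have he0 : e ≠ 0 := norm_ne_zero_iff.mp (by rw [he]; exact one_ne_zero)
  refine ⟨(ℝ ∙ e)ᗮ.reflection.trans (ℝ ∙ (e - u))ᗮ.reflection, ?_, Or.inr ?_⟩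
  · rw [show ((ℝ ∙ e)ᗮ.reflection.trans (ℝ ∙ (e - u))ᗮ.reflection).toLinearMap =
        (ℝ ∙ (e - u))ᗮ.reflection.toLinearMap ∘ₗ (ℝ ∙ e)ᗮ.reflection.toLinearMap from rfl,
      LinearMap.det_comp,
      det_reflection_orthogonal_singleton (sub_ne_zero.mpr hue),
      det_reflection_orthogonal_singleton he0]
    norm_num
  · rw [LinearIsometryEquiv.trans_apply, Submodule.reflection_orthogonalComplement_singleton_eq_neg,
      map_neg, Submodule.reflection_sub (he.trans hu.symm)]

end Rotation

theorem lintegral_Ioi_eq_ofReal_mul_lintegral_comp_mul_left (f : ℝ → ℝ≥0∞) {c : ℝ} (hc : 0 < c) :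
    ∫⁻ v in Set.Ioi 0, f v = ENNReal.ofReal c * ∫⁻ w in Set.Ioi 0, f (c * w) := by
  conv_lhs => rw [← Set.image_const_mul_Ioi_zero hc]
  rw [lintegral_image_eq_lintegral_abs_deriv_mul measurableSet_Ioi
    (fun _ _ => (hasDerivAt_const_mul c).hasDerivWithinAt) (mul_right_injective₀ hc.ne').injOn,
    abs_of_pos hc, lintegral_const_mul' _ _ ENNReal.ofReal_ne_top]

section RieszKernel

variable {d : ℕ} {γ : ℝ} {C : Set (EuclideanSpace ℝ (Fin d))}

theorem rieszKernel_eq_of_norm_eq_one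
    (hrot : ∀ θ : EuclideanSpace ℝ (Fin d) ≃ₗᵢ[ℝ] EuclideanSpace ℝ (Fin d),
      LinearMap.det θ.toLinearMap = 1 → θ '' C = C)
    {u e : EuclideanSpace ℝ (Fin d)} (hu : ‖u‖ = 1) (he : ‖e‖ = 1) :
    rieszKernel d γ C u = rieszKernel d γ C e := by
  obtain ⟨θ, hdet, hθe⟩ := exists_det_eq_one_apply_eq_or_apply_eq_neg he hu
  have hθC := hrot θ hdet
  have hvol (t : ℝ) : volume ((t • u +ᵥ C) ∩ C) = volume ((t • e +ᵥ C) ∩ C) := by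
    rcases hθe with h | h
    · rw [← h, ← map_smul, volume_map_vadd_inter_self θ hθC]
    · rw [← neg_neg u, ← h, smul_neg, ← map_smul, measure_neg_vadd_inter_self,
        volume_map_vadd_inter_self θ hθC]
  simp only [rieszKernel, hvol]

theorem rieszKernel_smul (hd : d ≠ 0) (x : EuclideanSpace ℝ (Fin d)) {r : ℝ} (hr : 0 < r) :
    rieszKernel d γ C (r • x) = ENNReal.ofReal (r ^ ((d : ℝ) * (1 - γ))) * rieszKernel d γ C x := by
  set c := r ^ (d : ℝ) with hc_def
  have hc : 0 < c := Real.rpow_pos_of_pos hr _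
  have hscale (w : ℝ) (hw : 0 < w) : (c * w) ^ (-(d : ℝ)⁻¹) • r • x = w ^ (-(d : ℝ)⁻¹) • x := by
    rw [Real.mul_rpow hc.le hw.le, hc_def, ← Real.rpow_mul hr.le, mul_neg,
      mul_inv_cancel₀ (Nat.cast_ne_zero.mpr hd), Real.rpow_neg_one, smul_smul, mul_right_comm,
      inv_mul_cancel₀ hr.ne', one_mul]
  have hfactor : r ^ ((d : ℝ) * (1 - γ)) = c * c ^ (-γ) := by
    rw [Real.rpow_mul hr.le, sub_eq_add_neg, Real.rpow_add hc, Real.rpow_one]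
  rw [rieszKernel, lintegral_Ioi_eq_ofReal_mul_lintegral_comp_mul_left _ hc, hfactor,
    ENNReal.ofReal_mul hc.le, mul_assoc, rieszKernel]
  congr 1
  rw [← lintegral_const_mul' _ _ ENNReal.ofReal_ne_top]
  refine setLIntegral_congr_fun measurableSet_Ioi fun w (hw : 0 < w) => ?_
  rw [hscale w hw, Real.mul_rpow hc.le hw.le, ENNReal.ofReal_mul (Real.rpow_nonneg hc.le _),
    mul_left_comm]

end RieszKernel

theorem rieszKernel_rotation_invariant_general
    (d : ℕ) (hd : 0 < d)
    (C : Set (EuclideanSpace ℝ (Fin d)))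
    (γ : ℝ)
    (hrot : ∀ θ : EuclideanSpace ℝ (Fin d) ≃ₗᵢ[ℝ] EuclideanSpace ℝ (Fin d),
      LinearMap.det (θ.toLinearEquiv : EuclideanSpace ℝ (Fin d) →ₗ[ℝ] EuclideanSpace ℝ (Fin d)) = 1 →
      θ '' C = C)
    (x : EuclideanSpace ℝ (Fin d)) (hx : x ≠ 0)
    (e₁ : EuclideanSpace ℝ (Fin d)) (he₁ : ‖e₁‖ = 1) :
    rieszKernel d γ C x =
      rieszKernel d γ C e₁ * ENNReal.ofReal (‖x‖ ^ (-(γ - 1) * (d:ℝ))) := by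
  have hr : 0 < ‖x‖ := norm_pos_iff.mpr hx
  have hx_eq : x = ‖x‖ • (‖x‖⁻¹ • x) := (smul_inv_smul₀ hr.ne' x).symm
  have hunit : ‖‖x‖⁻¹ • x‖ = 1 := norm_smul_inv_norm hx
  rw [hx_eq, rieszKernel_smul hd.ne' _ hr, rieszKernel_eq_of_norm_eq_one hrot hunit he₁, mul_comm,
    norm_smul, norm_norm, hunit, mul_one]
  congr 3
  ring

theorem rieszKernel_rotation_invariant
    (d : ℕ) (hd : 0 < d)
    (C : Set (EuclideanSpace ℝ (Fin d)))
    (hCm : MeasurableSet C) (hCb : Bornology.IsBounded C)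
    (γ : ℝ) (hγ1 : 1 < γ) (hγ2 : γ < 2)
    (hrot : ∀ θ : EuclideanSpace ℝ (Fin d) ≃ₗᵢ[ℝ] EuclideanSpace ℝ (Fin d),
      LinearMap.det (θ.toLinearEquiv : EuclideanSpace ℝ (Fin d) →ₗ[ℝ] EuclideanSpace ℝ (Fin d)) = 1 →
      θ '' C = C)
    (x : EuclideanSpace ℝ (Fin d)) (hx : x ≠ 0)
    (e₁ : EuclideanSpace ℝ (Fin d)) (he₁ : ‖e₁‖ = 1) :
    rieszKernel d γ C x =
      rieszKernel d γ C e₁ * ENNReal.ofReal (‖x‖ ^ (-(γ - 1) * (d:ℝ))) :=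
  rieszKernel_rotation_invariant_general d hd C γ hrot x hx e₁ he₁
end

section
/- Let C be a bounded measurable subset of ℝᵈ with Lebesgue measure |C| = 1, let γ ∈ (1,2), and let φ be a finite positive measure on ℝᵈ. Then ∫_{ℝᵈ} ∫₀^∞ φ(x + v^{1/d}C)² v^{−γ−1} dv dx = ∫_{ℝᵈ}∫_{ℝᵈ} K_{γ,C}(x − y) dφ(x) dφ(y), as an equality in [0,∞]. -/
/-
Writing φ(x + v^{1/d} C) = ∫ 1_C(v^{-1/d}(w - x)) dφ(w), the square becomes an integral over
φ ⊗ φ, and Tonelli moves the Lebesgue integral in x innermost. For fixed v, y, z that integral is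
the volume of (y - v^{1/d} C) ∩ (z - v^{1/d} C) = y - v^{1/d} ((v^{-1/d}(y - z) + C) ∩ C), that is
v · |(v^{-1/d}(y - z) + C) ∩ C|; the factor v turns the weight v^{-γ-1} into the v^{-γ} of the
kernel.
-/

open MeasureTheory Filter Topology Pointwise
open scoped ENNReal NNReal

open Set

section Fubini

variable {α β γ : Type*} [MeasurableSpace α] [MeasurableSpace β] [MeasurableSpace γ]
  {μ : Measure α} {ν : Measure β} {ρ : Measure γ} [SFinite μ] [SFinite ν] [SFinite ρ]

theorem lintegral_lintegral_lintegral_reverse {f : α × β × γ → ℝ≥0∞} (hf : Measurable f) :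
    ∫⁻ a, ∫⁻ b, ∫⁻ c, f (a, b, c) ∂ρ ∂ν ∂μ = ∫⁻ c, ∫⁻ b, ∫⁻ a, f (a, b, c) ∂μ ∂ν ∂ρ :=
  calc ∫⁻ a, ∫⁻ b, ∫⁻ c, f (a, b, c) ∂ρ ∂ν ∂μ
      = ∫⁻ b, ∫⁻ a, ∫⁻ c, f (a, b, c) ∂ρ ∂μ ∂ν :=
        lintegral_lintegral_swap
          ((hf.comp (MeasurableEquiv.prodAssoc).measurable).lintegral_prod_right').aemeasurable
    _ = ∫⁻ b, ∫⁻ c, ∫⁻ a, f (a, b, c) ∂μ ∂ρ ∂ν :=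
        lintegral_congr fun b => lintegral_lintegral_swap
          (hf.comp (by fun_prop : Measurable fun p : α × γ => (p.1, b, p.2))).aemeasurable
    _ = ∫⁻ c, ∫⁻ b, ∫⁻ a, f (a, b, c) ∂μ ∂ν ∂ρ :=
        lintegral_lintegral_swap hf.lintegral_prod_left'.aemeasurable

end Fubini

section Scaling

variable {E : Type*} [NormedAddCommGroup E] [NormedSpace ℝ E]
  {C : Set E} {t : ℝ}

theorem vadd_neg_smul_vadd_inter_eq_setOf (ht : t ≠ 0) (y z : E) :
    y +ᵥ (-t) • ((t⁻¹ • (y - z) +ᵥ C) ∩ C) = {x | t⁻¹ • (y - x) ∈ C ∧ t⁻¹ • (z - x) ∈ C} := by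
  ext x
  rw [mem_vadd_set_iff_neg_vadd_mem, mem_smul_set_iff_inv_smul_mem₀ (neg_ne_zero.2 ht),
    mem_inter_iff, mem_vadd_set_iff_neg_vadd_mem, mem_ofPred_eq, and_comm]
  have hy : (-t)⁻¹ • (-y +ᵥ x) = t⁻¹ • (y - x) := by
    rw [inv_neg, vadd_eq_add, neg_smul, ← smul_neg]; congr 1; abel
  have hz : -(t⁻¹ • (y - z)) +ᵥ t⁻¹ • (y - x) = t⁻¹ • (z - x) := by
    rw [vadd_eq_add, ← smul_neg, ← smul_add]; congr 1; abel
  rw [hy, hz]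

variable [MeasurableSpace E] [BorelSpace E]

theorem measure_vadd_smul_eq_lintegral_indicator (φ : Measure E) (hC : MeasurableSet C)
    (ht : t ≠ 0) (x : E) :
    φ (x +ᵥ t • C) = ∫⁻ w, C.indicator 1 (t⁻¹ • (w - x)) ∂φ := by
  have hpre : x +ᵥ t • C = (fun w => t⁻¹ • (w - x)) ⁻¹' C := by
    ext w
    rw [mem_vadd_set_iff_neg_vadd_mem, mem_smul_set_iff_inv_smul_mem₀ ht, vadd_eq_add,
      neg_add_eq_sub, mem_preimage]
  rw [hpre, ← lintegral_indicator_one (hC.preimage (by fun_prop))]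
  rfl

variable [FiniteDimensional ℝ E]

theorem lintegral_indicator_smul_sub_mul_indicator_smul_sub (μ : Measure E) [μ.IsAddHaarMeasure]
    (hC : MeasurableSet C) (ht : t ≠ 0) (y z : E) :
    ∫⁻ x, C.indicator 1 (t⁻¹ • (y - x)) * C.indicator 1 (t⁻¹ • (z - x)) ∂μ
      = ENNReal.ofReal (|t| ^ Module.finrank ℝ E) * μ ((t⁻¹ • (y - z) +ᵥ C) ∩ C) := by
  have hmeas : MeasurableSet ((t⁻¹ • (y - z) +ᵥ C) ∩ C) := (hC.const_vadd _).inter hC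
  rw [← abs_neg, ← abs_pow, ← Measure.addHaar_smul, ← measure_vadd μ y,
    vadd_neg_smul_vadd_inter_eq_setOf ht, ← lintegral_indicator_one]
  · congr with x
    by_cases hy : t⁻¹ • (y - x) ∈ C <;> by_cases hz : t⁻¹ • (z - x) ∈ C <;> simp [hy, hz]
  · rw [← vadd_neg_smul_vadd_inter_eq_setOf ht]
    exact (hmeas.const_smul₀ _).const_vadd _

end Scaling

section Grain

variable {d : ℕ} {γ : ℝ} {C : Set (EuclideanSpace ℝ (Fin d))}

noncomputable def grainIntegrand (d : ℕ) (γ : ℝ) (C : Set (EuclideanSpace ℝ (Fin d)))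
    (x : EuclideanSpace ℝ (Fin d)) (v : ℝ) (y z : EuclideanSpace ℝ (Fin d)) : ℝ≥0∞ :=
  ENNReal.ofReal (v ^ (-γ - 1)) *
    (C.indicator 1 ((v ^ (d : ℝ)⁻¹)⁻¹ • (y - x)) * C.indicator 1 ((v ^ (d : ℝ)⁻¹)⁻¹ • (z - x)))

theorem measurable_grainIntegrand (hC : MeasurableSet C) :
    Measurable fun q : EuclideanSpace ℝ (Fin d) × ℝ × EuclideanSpace ℝ (Fin d) ×
        EuclideanSpace ℝ (Fin d) => grainIntegrand d γ C q.1 q.2.1 q.2.2.1 q.2.2.2 := by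
  have hind : Measurable (C.indicator (1 : EuclideanSpace ℝ (Fin d) → ℝ≥0∞)) :=
    measurable_one.indicator hC
  unfold grainIntegrand
  fun_prop

theorem grain_sq_mul_eq_lintegral_grainIntegrand (φ : Measure (EuclideanSpace ℝ (Fin d)))
    [SFinite φ] (hC : MeasurableSet C) (x : EuclideanSpace ℝ (Fin d)) {v : ℝ} (hv : 0 < v) :
    φ (x +ᵥ v ^ (d : ℝ)⁻¹ • C) ^ 2 * ENNReal.ofReal (v ^ (-γ - 1))
      = ∫⁻ p, grainIntegrand d γ C x v p.1 p.2 ∂φ.prod φ := by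
  have hind : Measurable fun w =>
      C.indicator (1 : EuclideanSpace ℝ (Fin d) → ℝ≥0∞) ((v ^ (d : ℝ)⁻¹)⁻¹ • (w - x)) :=
    (measurable_one.indicator hC).comp (by fun_prop)
  rw [measure_vadd_smul_eq_lintegral_indicator φ hC (Real.rpow_pos_of_pos hv _).ne', sq,
    ← lintegral_prod_mul hind.aemeasurable hind.aemeasurable, mul_comm,
    ← lintegral_const_mul _ (by fun_prop)]
  rfl

theorem lintegral_grainIntegrand (hd : 0 < d) (hC : MeasurableSet C) {v : ℝ} (hv : 0 < v)
    (y z : EuclideanSpace ℝ (Fin d)) :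
    ∫⁻ x, grainIntegrand d γ C x v y z
      = volume ((v ^ (-(d : ℝ)⁻¹) • (y - z) +ᵥ C) ∩ C) * ENNReal.ofReal (v ^ (-γ)) := by
  have hscale : |v ^ (d : ℝ)⁻¹| ^ d = v := by
    rw [abs_of_pos (Real.rpow_pos_of_pos hv _), Real.rpow_inv_natCast_pow hv.le hd.ne']
  have hexp : v ^ (-γ - 1) * v = v ^ (-γ) := by
    rw [Real.rpow_sub_one hv.ne', div_mul_cancel₀ _ hv.ne']
  have hind : Measurable (C.indicator (1 : EuclideanSpace ℝ (Fin d) → ℝ≥0∞)) :=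
    measurable_one.indicator hC
  unfold grainIntegrand
  rw [lintegral_const_mul _ (by fun_prop),
    lintegral_indicator_smul_sub_mul_indicator_smul_sub _ hC (Real.rpow_pos_of_pos hv _).ne',
    finrank_euclideanSpace_fin, hscale, ← mul_assoc,
    ← ENNReal.ofReal_mul (Real.rpow_nonneg hv.le _), hexp, mul_comm,
    Real.rpow_neg hv.le (d : ℝ)⁻¹]

end Grain

theorem grain_square_integral_eq_kernel_energy_general
    (d : ℕ) (hd : 0 < d)
    (C : Set (EuclideanSpace ℝ (Fin d)))
    (hCm : MeasurableSet C)
    (γ : ℝ)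
    (φ : Measure (EuclideanSpace ℝ (Fin d))) [IsFiniteMeasure φ] :
    (∫⁻ x : EuclideanSpace ℝ (Fin d), ∫⁻ v in Set.Ioi (0:ℝ),
        (φ (x +ᵥ (v ^ ((d:ℝ)⁻¹) • C))) ^ 2 * ENNReal.ofReal (v ^ (-γ - 1)))
    = ∫⁻ x, ∫⁻ y, rieszKernel d γ C (x - y) ∂φ ∂φ := by
  have hG := measurable_grainIntegrand (γ := γ) hCm
  calc _ = ∫⁻ x, ∫⁻ v in Ioi 0, (∫⁻ p, grainIntegrand d γ C x v p.1 p.2 ∂φ.prod φ) :=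
        lintegral_congr fun x => setLIntegral_congr_fun measurableSet_Ioi fun _ hv =>
          grain_sq_mul_eq_lintegral_grainIntegrand φ hCm x hv
    _ = ∫⁻ p, (∫⁻ v in Ioi 0, ∫⁻ x, grainIntegrand d γ C x v p.1 p.2) ∂φ.prod φ :=
        lintegral_lintegral_lintegral_reverse hG
    _ = ∫⁻ y, ∫⁻ z, (∫⁻ v in Ioi 0, ∫⁻ x, grainIntegrand d γ C x v y z) ∂φ ∂φ :=
        lintegral_prod _ hG.lintegral_prod_left'.lintegral_prod_left'.aemeasurable
    _ = _ :=
        lintegral_congr fun y => lintegral_congr fun z =>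
          setLIntegral_congr_fun measurableSet_Ioi fun _ hv =>
            lintegral_grainIntegrand hd hCm hv y z

theorem grain_square_integral_eq_kernel_energy
    (d : ℕ) (hd : 0 < d)
    (C : Set (EuclideanSpace ℝ (Fin d)))
    (hCm : MeasurableSet C) (hCb : Bornology.IsBounded C)
    (hC1 : volume C = 1)
    (γ : ℝ) (hγ1 : 1 < γ) (hγ2 : γ < 2)
    (φ : Measure (EuclideanSpace ℝ (Fin d))) [IsFiniteMeasure φ] :
    (∫⁻ x : EuclideanSpace ℝ (Fin d), ∫⁻ v in Set.Ioi (0:ℝ),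
        (φ (x +ᵥ (v ^ ((d:ℝ)⁻¹) • C))) ^ 2 * ENNReal.ofReal (v ^ (-γ - 1)))
    = ∫⁻ x, ∫⁻ y, rieszKernel d γ C (x - y) ∂φ ∂φ :=
  grain_square_integral_eq_kernel_energy_general d hd C hCm γ φ
end

section
/- Let C be a bounded measurable subset of ℝᵈ with Lebesgue measure |C| = 1 and let γ ∈ (1,2). Then for every x ∈ ℝᵈ, ∫_{{y ∈ ℝᵈ : |y| > 1}} K_{γ,C}(x − y) dy = ∞. -/
open MeasureTheory Filter Topology Pointwise
open scoped ENNReal NNReal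

/-!
Translation is continuous in measure, so `|(a + C) ∩ C| ≥ 1/2` for `‖a‖ < δ`. Hence, when
`‖z‖ < ρ`, the integrand of `K(z)` is at least `v ^ (-γ) / 2` for `v > (ρ/δ)^d`, which gives
`K(z) ≳ ρ ^ (-d(γ-1))`. A ball of radius `R` lying in `{‖y‖ > 1}` within distance `3R` of `x`
therefore contributes `≳ R^d · R^(-d(γ-1)) = R^(d(2-γ))`, unbounded in `R` because `γ < 2`.
-/

open scoped symmDiff

section Translation

variable {G : Type*} [AddGroup G] [TopologicalSpace G] [IsTopologicalAddGroup G]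
  [MeasurableSpace G] [BorelSpace G] (μ : Measure G) [μ.IsAddLeftInvariant]
  [IsLocallyFiniteMeasure μ] [μ.InnerRegularCompactLTTop]

theorem tendsto_measure_vadd_symmDiff_self {C : Set G} (hC : MeasurableSet C) (hCfin : μ C ≠ ∞) :
    Tendsto (fun a : G => μ ((a +ᵥ C) ∆ C)) (𝓝 0) (𝓝 0) := by
  let translate : G → C(G, G) := fun a => ⟨fun t => -a + t, by fun_prop⟩
  have hcont : Continuous translate :=
    ContinuousMap.continuous_of_continuous_uncurry _ (continuous_fst.neg.add continuous_snd)
  have hpre : ∀ a, translate a ⁻¹' C = a +ᵥ C := fun a => by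
    ext t; simp [translate, Set.mem_vadd_set_iff_neg_vadd_mem]
  have h := tendsto_measure_symmDiff_preimage_nhds_zero (hcont.tendsto 0)
    (.of_forall fun a => measurePreserving_add_left μ (-a)) (measurePreserving_add_left μ (-0))
    hC.nullMeasurableSet hCfin
  simpa only [hpre, zero_vadd] using h

theorem tendsto_measure_vadd_inter_self {C : Set G} (hC : MeasurableSet C) (hCfin : μ C ≠ ∞) :
    Tendsto (fun a : G => μ ((a +ᵥ C) ∩ C)) (𝓝 0) (𝓝 (μ C)) := by
  have hlower : Tendsto (fun a : G => μ C - μ ((a +ᵥ C) ∆ C)) (𝓝 0) (𝓝 (μ C)) := by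
    simpa using ENNReal.Tendsto.sub tendsto_const_nhds
      (tendsto_measure_vadd_symmDiff_self μ hC hCfin) (Or.inl hCfin)
  refine tendsto_of_tendsto_of_tendsto_of_le_of_le hlower tendsto_const_nhds (fun a => ?_)
    (fun a => measure_mono Set.inter_subset_right)
  calc μ C - μ ((a +ᵥ C) ∆ C) ≤ μ C - μ (C \ (a +ᵥ C)) :=
        tsub_le_tsub_left (measure_mono fun t ht => Or.inr ht) _
    _ ≤ μ ((a +ᵥ C) ∩ C) := by
        rw [tsub_le_iff_right, Set.inter_comm]
        exact measure_le_inter_add_sdiff _ _ _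

end Translation

theorem lintegral_Ioi_rpow_neg {γ T : ℝ} (hγ : 1 < γ) (hT : 0 < T) :
    ∫⁻ v in Set.Ioi T, ENNReal.ofReal (v ^ (-γ)) = ENNReal.ofReal (T ^ (1 - γ) / (γ - 1)) := by
  have hnonneg : 0 ≤ᵐ[volume.restrict (Set.Ioi T)] fun v : ℝ => v ^ (-γ) :=
    (ae_restrict_iff' measurableSet_Ioi).2 <|
      .of_forall fun v hv => Real.rpow_nonneg (hT.trans hv).le _
  rw [← ofReal_integral_eq_lintegral_ofReal (integrableOn_Ioi_rpow_of_lt (by linarith) hT)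
    hnonneg, integral_Ioi_rpow_of_lt (by linarith) hT, neg_add_eq_sub, ← neg_sub γ 1, div_neg,
    neg_div, neg_neg]

theorem le_rieszKernel_of_norm_lt {d : ℕ} (hd : 0 < d) {γ : ℝ} (hγ : 1 < γ)
    {C : Set (EuclideanSpace ℝ (Fin d))} {m : ℝ≥0∞} {δ : ℝ} (hδ : 0 < δ)
    (hm : ∀ a : EuclideanSpace ℝ (Fin d), ‖a‖ < δ → m ≤ volume ((a +ᵥ C) ∩ C))
    {ρ : ℝ} {z : EuclideanSpace ℝ (Fin d)} (hz : ‖z‖ < ρ) :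
    m * ENNReal.ofReal ((ρ / δ) ^ ((d : ℝ) * (1 - γ)) / (γ - 1)) ≤ rieszKernel d γ C z := by
  have hρ : 0 < ρ := (norm_nonneg z).trans_lt hz
  have hdR : (0 : ℝ) < d := Nat.cast_pos.2 hd
  set T : ℝ := (ρ / δ) ^ (d : ℝ)
  have hT : 0 < T := by positivity
  have hshort : ∀ v ∈ Set.Ioi T, ‖v ^ (-(d : ℝ)⁻¹) • z‖ < δ := by
    intro v (hv : T < v)
    have hv_pow : v ^ (-(d : ℝ)⁻¹) ≤ δ / ρ := calc
      v ^ (-(d : ℝ)⁻¹) ≤ T ^ (-(d : ℝ)⁻¹) :=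
        Real.rpow_le_rpow_of_nonpos hT hv.le (by simp [hdR.le])
      _ = δ / ρ := by
        rw [← Real.rpow_mul (by positivity), mul_neg, mul_inv_cancel₀ hdR.ne',
          Real.rpow_neg_one, inv_div]
    rw [norm_smul, Real.norm_of_nonneg (Real.rpow_nonneg (hT.trans hv).le _)]
    calc v ^ (-(d : ℝ)⁻¹) * ‖z‖ ≤ δ / ρ * ‖z‖ := by gcongr
      _ < δ / ρ * ρ := by gcongr
      _ = δ := div_mul_cancel₀ δ hρ.ne'
  have hTpow : T ^ (1 - γ) = (ρ / δ) ^ ((d : ℝ) * (1 - γ)) := by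
    rw [← Real.rpow_mul (by positivity)]
  calc m * ENNReal.ofReal ((ρ / δ) ^ ((d : ℝ) * (1 - γ)) / (γ - 1))
      = ∫⁻ v in Set.Ioi T, m * ENNReal.ofReal (v ^ (-γ)) := by
        rw [lintegral_const_mul m (by fun_prop), lintegral_Ioi_rpow_neg hγ hT, hTpow]
    _ ≤ ∫⁻ v in Set.Ioi T,
          volume ((v ^ (-(d : ℝ)⁻¹) • z +ᵥ C) ∩ C) * ENNReal.ofReal (v ^ (-γ)) :=
        setLIntegral_mono' measurableSet_Ioi fun v hv => by gcongr; exact hm _ (hshort v hv)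
    _ ≤ rieszKernel d γ C z := lintegral_mono_set (Set.Ioi_subset_Ioi hT.le)

theorem exists_ball_subset_norm_gt {E : Type*} [NormedAddCommGroup E] [NormedSpace ℝ E]
    [Nontrivial E] (x : E) {R : ℝ} (hR : 1 + ‖x‖ ≤ R) :
    ∃ c : E, ∀ y ∈ Metric.ball c R, 1 < ‖y‖ ∧ ‖x - y‖ < 3 * R := by
  obtain ⟨v, hv⟩ := exists_norm_eq E (show (0 : ℝ) ≤ 2 * R by linarith [norm_nonneg x])
  refine ⟨x + v, fun y hy => ?_⟩
  rw [Metric.mem_ball] at hy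
  have hxc : dist x (x + v) = 2 * R := by rw [dist_comm, dist_eq_norm, add_sub_cancel_left, hv]
  have hxy : dist x y ≤ ‖x‖ + ‖y‖ := by rw [dist_eq_norm]; exact norm_sub_le x y
  rw [← dist_eq_norm]
  constructor <;>
    linarith [dist_triangle x (x + v) y, dist_triangle x y (x + v), dist_comm y (x + v)]

theorem tendsto_rpow_mul_rpow_const_mul_atTop {p q a : ℝ} (ha : 0 < a) (hpq : 0 < p + q) :
    Tendsto (fun R : ℝ => R ^ p * (a * R) ^ q) atTop atTop := by
  have heq : (fun R : ℝ => R ^ (p + q) * a ^ q) =ᶠ[atTop] fun R => R ^ p * (a * R) ^ q := by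
    filter_upwards [eventually_gt_atTop 0] with R hR
    rw [Real.mul_rpow ha.le hR.le, Real.rpow_add hR]
    ring
  exact ((tendsto_rpow_atTop hpq).atTop_mul_const (by positivity)).congr' heq

theorem le_setLIntegral_norm_gt_rieszKernel {d : ℕ} (hd : 0 < d) {γ : ℝ} (hγ : 1 < γ)
    {C : Set (EuclideanSpace ℝ (Fin d))} {m : ℝ≥0∞} {δ : ℝ} (hδ : 0 < δ)
    (hm : ∀ a : EuclideanSpace ℝ (Fin d), ‖a‖ < δ → m ≤ volume ((a +ᵥ C) ∩ C))
    (x : EuclideanSpace ℝ (Fin d)) {R : ℝ} (hR : 1 + ‖x‖ ≤ R) :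
    ENNReal.ofReal (R ^ (d : ℝ) * (3 / δ * R) ^ ((d : ℝ) * (1 - γ))) *
        (m * volume (Metric.ball (0 : EuclideanSpace ℝ (Fin d)) 1) * ENNReal.ofReal (γ - 1)⁻¹) ≤
      ∫⁻ y in {y | 1 < ‖y‖}, rieszKernel d γ C (x - y) := by
  have : Nonempty (Fin d) := ⟨⟨0, hd⟩⟩
  have hR₀ : 0 < R := by linarith [norm_nonneg x]
  obtain ⟨c, hc⟩ := exists_ball_subset_norm_gt x hR
  calc ENNReal.ofReal (R ^ (d : ℝ) * (3 / δ * R) ^ ((d : ℝ) * (1 - γ))) *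
        (m * volume (Metric.ball (0 : EuclideanSpace ℝ (Fin d)) 1) * ENNReal.ofReal (γ - 1)⁻¹)
      = m * ENNReal.ofReal ((3 * R / δ) ^ ((d : ℝ) * (1 - γ)) / (γ - 1)) *
          volume (Metric.ball c R) := by
        rw [Measure.addHaar_ball _ _ hR₀.le, finrank_euclideanSpace_fin, ← Real.rpow_natCast,
          div_mul_eq_mul_div, div_eq_mul_inv _ (γ - 1), ENNReal.ofReal_mul (by positivity),
          ENNReal.ofReal_mul (by positivity)]
        ring
    _ = ∫⁻ _ in Metric.ball c R,
          m * ENNReal.ofReal ((3 * R / δ) ^ ((d : ℝ) * (1 - γ)) / (γ - 1)) :=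
        (setLIntegral_const _ _).symm
    _ ≤ ∫⁻ y in Metric.ball c R, rieszKernel d γ C (x - y) :=
        setLIntegral_mono' measurableSet_ball fun y hy =>
          le_rieszKernel_of_norm_lt hd hγ hδ hm (hc y hy).2
    _ ≤ ∫⁻ y in {y | 1 < ‖y‖}, rieszKernel d γ C (x - y) :=
        lintegral_mono_set fun y hy => (hc y hy).1

theorem rieszKernel_tail_integral_infinite_general
    (d : ℕ) (hd : 0 < d)
    (C : Set (EuclideanSpace ℝ (Fin d)))
    (hCm : MeasurableSet C)
    (hC1 : volume C = 1)
    (γ : ℝ) (hγ1 : 1 < γ) (hγ2 : γ < 2)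
    (x : EuclideanSpace ℝ (Fin d)) :
    ∫⁻ y in {y : EuclideanSpace ℝ (Fin d) | 1 < ‖y‖},
        rieszKernel d γ C (x - y)
      ∂(volume : Measure (EuclideanSpace ℝ (Fin d))) = ⊤ := by
  obtain ⟨δ, hδ, hhalf⟩ : ∃ δ > 0, ∀ a : EuclideanSpace ℝ (Fin d), ‖a‖ < δ →
      2⁻¹ ≤ volume ((a +ᵥ C) ∩ C) := by
    have h := (tendsto_measure_vadd_inter_self volume hCm (by simp [hC1])).eventually
      (lt_mem_nhds (hC1 ▸ ENNReal.one_half_lt_one))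
    obtain ⟨δ, hδ, h⟩ := Metric.eventually_nhds_iff.1 h
    exact ⟨δ, hδ, fun a ha => (h (by simpa using ha)).le⟩
  set κ := 2⁻¹ * volume (Metric.ball (0 : EuclideanSpace ℝ (Fin d)) 1) * ENNReal.ofReal (γ - 1)⁻¹
  have hκ : κ ≠ 0 := by
    refine mul_ne_zero (mul_ne_zero (by simp) (Metric.measure_ball_pos _ _ one_pos).ne') ?_
    simpa using hγ1
  have hgrowth := tendsto_rpow_mul_rpow_const_mul_atTop (p := d) (q := d * (1 - γ))
    (div_pos three_pos hδ) (by nlinarith [(Nat.cast_pos.2 hd : (0 : ℝ) < d)])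
  have htop := ENNReal.Tendsto.mul_const (ENNReal.tendsto_ofReal_atTop.comp hgrowth)
    (b := κ) (.inl ENNReal.top_ne_zero)
  rw [ENNReal.top_mul hκ] at htop
  exact eq_top_iff.2 <| le_of_tendsto htop <| (eventually_ge_atTop _).mono fun R hR =>
    le_setLIntegral_norm_gt_rieszKernel hd hγ1 hδ hhalf x hR

theorem rieszKernel_tail_integral_infinite
    (d : ℕ) (hd : 0 < d)
    (C : Set (EuclideanSpace ℝ (Fin d)))
    (hCm : MeasurableSet C) (hCb : Bornology.IsBounded C)
    (hC1 : volume C = 1)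
    (γ : ℝ) (hγ1 : 1 < γ) (hγ2 : γ < 2)
    (x : EuclideanSpace ℝ (Fin d)) :
    ∫⁻ y in {y : EuclideanSpace ℝ (Fin d) | 1 < ‖y‖},
        rieszKernel d γ C (x - y)
      ∂(volume : Measure (EuclideanSpace ℝ (Fin d))) = ⊤ :=
  rieszKernel_tail_integral_infinite_general d hd C hCm hC1 γ hγ1 hγ2 x
end
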